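/- arXiv:2206.09118 — 11 statements merged into one kernel-verified Lean document; each statement's English description precedes it below -/
import Mathlib

section
/- If m > n ≥ 1 and σ_{φ,𝔴}^n = σ_{φ,𝔴}^m, then for every α ∈ Γ, either φ^n(α) = φ^m(α) or 𝔴_α 𝔴_{φ(α)} ⋯ 𝔴_{φ^{n-1}(α)} = 0. -/
open Function Set

/-- The weighted generalized shift `σ_{φ,𝔴} : F^Γ → F^Γ`,
`σ_{φ,𝔴}((x_α)_α) = (𝔴_α x_{φ(α)})_α`. The unweighted shift `σ_φ` is `wshift φ 1`. -/
def wshift {F : Type*} [Field F] {Γ : Type*} (φ : Γ → Γ) (w : Γ → F) :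
    (Γ → F) → (Γ → F) :=
  fun x α => w α * x (φ α)

/-- If `m > n ≥ 1` and `σ_{φ,𝔴}^n = σ_{φ,𝔴}^m`, then for every `α`, either
`φ^n(α) = φ^m(α)` or `𝔴_α 𝔴_{φ(α)} ⋯ 𝔴_{φ^{n-1}(α)} = 0`. -/
theorem stmt_1 {F : Type*} [Field F] [Fintype F] {Γ : Type*} [Nonempty Γ]
    (φ : Γ → Γ) (w : Γ → F) (n m : ℕ) (hn : 1 ≤ n) (hnm : n < m)
    (h : (wshift φ w)^[n] = (wshift φ w)^[m]) :
    ∀ α : Γ, φ^[n] α = φ^[m] α ∨ ∏ i ∈ Finset.range n, w (φ^[i] α) = 0 := by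
  have iter : ∀ (k : ℕ) (x : Γ → F) (α : Γ),
      (wshift φ w)^[k] x α = (∏ i ∈ Finset.range k, w (φ^[i] α)) * x (φ^[k] α) := by
    intro k
    induction k with
    | zero => intro x α; simp
    | succ k ih =>
      intro x α
      rw [Function.iterate_succ_apply, ih, Finset.prod_range_succ,
        Function.iterate_succ_apply']
      simp [wshift]
      ring
  intro α
  by_contra hc
  push_neg at hc
  obtain ⟨h1, h2⟩ := hc
  classical
  set x : Γ → F := fun β => if β = φ^[n] α then 1 else 0 with hx
  have := congrFun (congrFun h x) α
  rw [iter, iter] at this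
  simp only [hx, if_pos rfl, if_neg (fun e => h1 (e.symm ▸ rfl) : ¬ φ^[m] α = φ^[n] α),
    mul_one, mul_zero] at this
  exact h2 this
end

section
/- If sup({n : (n,α) ∈ 𝒯 for some α ∈ Γ} ∪ {0}) < +∞, then σ_{φ,𝔴} is quasi-periodic, i.e. there exist m > n ≥ 1 with σ_{φ,𝔴}^n = σ_{φ,𝔴}^m. -/
open Function Set

/-- `(n, α) ∈ 𝒯` iff `{φ^i(α) : 0 ≤ i ≤ n}` is an `(n+1)`-set and `∏_{0≤i≤n} 𝔴_{φ^i(α)} ≠ 0`. -/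
def Tset {F : Type*} [Field F] {Γ : Type*} (φ : Γ → Γ) (w : Γ → F) (n : ℕ) (α : Γ) : Prop :=
  ((fun i : ℕ => φ^[i] α) '' Set.Iic n).ncard = n + 1 ∧
    ∏ i ∈ Finset.range (n + 1), w (φ^[i] α) ≠ 0

lemma wshift_iterate {F : Type*} [Field F] {Γ : Type*} (φ : Γ → Γ) (w : Γ → F)
    (n : ℕ) (x : Γ → F) (α : Γ) :
    (wshift φ w)^[n] x α = (∏ i ∈ Finset.range n, w (φ^[i] α)) * x (φ^[n] α) := by
  induction n generalizing x with
  | zero => simp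
  | succ n ih =>
    rw [Function.iterate_succ_apply, ih, Finset.prod_range_succ,
      Function.iterate_succ_apply']
    simp only [wshift]
    ring

/-- If `sup({n : (n,α) ∈ 𝒯 for some α} ∪ {0}) < +∞`, then `σ_{φ,𝔴}` is quasi-periodic:
there exist `m > n ≥ 1` with `σ_{φ,𝔴}^n = σ_{φ,𝔴}^m`. -/
theorem stmt_2 {F : Type*} [Field F] [Fintype F] {Γ : Type*} [Nonempty Γ]
    (φ : Γ → Γ) (w : Γ → F)
    (h : ∃ k : ℕ, ∀ (n : ℕ) (α : Γ), Tset φ w n α → n ≤ k) :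
    ∃ m n : ℕ, 1 ≤ n ∧ n < m ∧ (wshift φ w)^[n] = (wshift φ w)^[m] := by
  obtain ⟨k, hk⟩ := h
  have hd1 : 1 ≤ Fintype.card F - 1 := by
    have := Fintype.one_lt_card (α := F)
    omega
  have hM1 : 1 ≤ (Fintype.card F - 1) * (k + 2).factorial :=
    Nat.one_le_iff_ne_zero.mpr (Nat.mul_ne_zero (by omega) (k + 2).factorial_ne_zero)
  refine ⟨k + 2 + (Fintype.card F - 1) * (k + 2).factorial, k + 2, by omega, by omega, ?_⟩
  funext x α
  rw [wshift_iterate, wshift_iterate]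
  by_cases h0 : ∏ i ∈ Finset.range (k + 2), w (φ^[i] α) = 0
  · rw [h0, Finset.prod_range_add, h0, zero_mul, zero_mul, zero_mul]
  · -- all weights along the first k+2 orbit points are nonzero
    have hne : ∀ i, i < k + 2 → w (φ^[i] α) ≠ 0 := fun i hi =>
      Finset.prod_ne_zero_iff.mp h0 i (Finset.mem_range.mpr hi)
    -- the orbit must collide within the first k+2 points
    have hnT : ¬ Tset φ w (k + 1) α := fun hT => by have := hk (k + 1) α hT; omega
    have hncard : ((fun i : ℕ => φ^[i] α) '' Set.Iic (k + 1)).ncard ≠ k + 2 := by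
      intro hc
      exact hnT ⟨hc, h0⟩
    have hninj : ¬ Set.InjOn (fun i : ℕ => φ^[i] α) (Set.Iic (k + 1)) := by
      intro hinj
      apply hncard
      rw [Set.ncard_image_of_injOn hinj, ← Finset.coe_Iic, Set.ncard_coe_finset, Nat.card_Iic]
    rw [Set.InjOn] at hninj
    push_neg at hninj
    obtain ⟨a, ha, b, hb, hab, hne'⟩ := hninj
    rw [Set.mem_Iic] at ha hb
    obtain ⟨p, q, hplt, hqle, heq⟩ : ∃ p q : ℕ, p < q ∧ q ≤ k + 1 ∧ φ^[q] α = φ^[p] α := by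
      rcases lt_trichotomy a b with h' | h' | h'
      · exact ⟨a, b, h', hb, hab.symm⟩
      · exact absurd h' hne'
      · exact ⟨b, a, h', ha, hab⟩
    set r := q - p with hrdef
    have hrpos : 0 < r := by omega
    -- eventual periodicity
    have hper : ∀ n, p ≤ n → φ^[n + r] α = φ^[n] α := by
      intro n hn
      have h1 : n + r = (n - p) + q := by omega
      have h2 : n = (n - p) + p := by omega
      rw [h1, Function.iterate_add_apply, heq, ← Function.iterate_add_apply, ← h2]
    have hpert : ∀ n, p ≤ n → ∀ t : ℕ, φ^[n + t * r] α = φ^[n] α := by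
      intro n hn t
      induction t with
      | zero => simp
      | succ t ih =>
        have h1 : n + (t + 1) * r = (n + t * r) + r := by ring
        rw [h1, hper _ (by omega), ih]
    have hred : ∀ n, p ≤ n → ∃ j, p ≤ j ∧ j < q ∧ φ^[n] α = φ^[j] α := by
      intro n
      induction n using Nat.strong_induction_on with
      | _ n ih =>
        intro hn
        by_cases hc : n < q
        · exact ⟨n, hn, hc, rfl⟩
        · have h1 : p ≤ n - r := by omega
          obtain ⟨j, hj1, hj2, hj3⟩ := ih (n - r) (by omega) h1
          refine ⟨j, hj1, hj2, ?_⟩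
          have h2 : n = (n - r) + r := by omega
          rw [h2, hper _ h1, hj3]
    have hwnz : ∀ n, p ≤ n → w (φ^[n] α) ≠ 0 := by
      intro n hn
      obtain ⟨j, hj1, hj2, hj3⟩ := hred n hn
      rw [hj3]
      exact hne j (by omega)
    set C := ∏ i ∈ Finset.range r, w (φ^[k + 2 + i] α) with hC
    have hCne : C ≠ 0 :=
      Finset.prod_ne_zero_iff.mpr (fun i _ => hwnz _ (by omega))
    have hprodt : ∀ t : ℕ, ∏ i ∈ Finset.range (t * r), w (φ^[k + 2 + i] α) = C ^ t := by
      intro t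
      induction t with
      | zero => simp
      | succ t ih =>
        have h1 : (t + 1) * r = t * r + r := by ring
        rw [h1, Finset.prod_range_add, ih, pow_succ]
        congr 1
        apply Finset.prod_congr rfl
        intro i _
        have h2 : k + 2 + (t * r + i) = (k + 2 + i) + t * r := by ring
        rw [h2, hpert _ (by omega) t]
    have hrdvd : r ∣ (k + 2).factorial := Nat.dvd_factorial hrpos (by omega)
    have hsr : (Fintype.card F - 1) * (k + 2).factorial
        = ((Fintype.card F - 1) * ((k + 2).factorial / r)) * r := by
      have h1 : (k + 2).factorial / r * r = (k + 2).factorial := Nat.div_mul_cancel hrdvd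
      rw [mul_assoc, h1]
    have hCd : C ^ (Fintype.card F - 1) = 1 := FiniteField.pow_card_sub_one_eq_one C hCne
    have hCM : ∏ i ∈ Finset.range ((Fintype.card F - 1) * (k + 2).factorial),
        w (φ^[k + 2 + i] α) = 1 := by
      rw [hsr, hprodt, pow_mul, hCd, one_pow]
    have hiter : φ^[k + 2 + (Fintype.card F - 1) * (k + 2).factorial] α = φ^[k + 2] α := by
      rw [hsr]
      exact hpert (k + 2) (by omega) _
    have hsplit : ∏ i ∈ Finset.range (k + 2 + (Fintype.card F - 1) * (k + 2).factorial),
        w (φ^[i] α) = (∏ i ∈ Finset.range (k + 2), w (φ^[i] α)) *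
          ∏ i ∈ Finset.range ((Fintype.card F - 1) * (k + 2).factorial), w (φ^[k + 2 + i] α) :=
      Finset.prod_range_add _ _ _
    rw [hsplit, hCM, mul_one, hiter]
end

section
/- The covariant set-theoretical entropy ent_set(σ_{φ,𝔴}) = 𝗈(σ_{φ,𝔴}) equals 0 if there exist m > n ≥ 1 with σ_{φ,𝔴}^n = σ_{φ,𝔴}^m, and equals +∞ otherwise. In particular, ent_set(σ_{φ,𝔴}) ∈ {0, +∞}, and ent_set(σ_{φ,𝔴}) = 0 if and only if σ_{φ,𝔴} is quasi-periodic. -/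
open Function Set

/-- An `f`-orbit: a sequence with `f (a n) = a (n+1)` for all `n`. -/
def IsOrbit {A : Type*} (f : A → A) (a : ℕ → A) : Prop := ∀ n : ℕ, f (a n) = a (n + 1)

/-- There exist `m` injective `f`-orbits with pairwise disjoint ranges. -/
def HasDisjointOrbits {A : Type*} (f : A → A) (m : ℕ) : Prop :=
  ∃ a : Fin m → ℕ → A, (∀ i, IsOrbit f (a i) ∧ Function.Injective (a i)) ∧
    ∀ i j, i ≠ j → Disjoint (Set.range (a i)) (Set.range (a j))

/-- The infinite orbit number `𝗈(f) ∈ ℕ ∪ {+∞}`. -/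
noncomputable def orbitNumber {A : Type*} (f : A → A) : ℕ∞ :=
  sSup ({0} ∪ {m : ℕ∞ | ∃ k : ℕ, m = (k : ℕ∞) ∧ 1 ≤ k ∧ HasDisjointOrbits f k})

/-- Covariant set-theoretical entropy: `ent_set f = 𝗈(f)`. -/
noncomputable def entSet {A : Type*} (f : A → A) : ℕ∞ := orbitNumber f

/-! If `σ^n = σ^m` with `n < m`, no orbit of `σ = σ_{φ,𝔴}` is injective. Otherwise some `x ∈ F^Γ`
is annihilated by no nonzero polynomial in `σ`. Indeed, give `F` the discrete topology: if every
`x` were annihilated, the countably many closed subgroups `ker p(σ)` would cover the compact group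
`F^Γ`, so by Baire one of them would be open, hence of finite index. Since `σ` acts on the finite
quotient, two of its powers agree there, which makes `σ` algebraic over `F`; then `F[σ]` is finite
and `σ^n = σ^m`. For such an `x`, the sequences `n ↦ σ^n x + σ^(n+i+1) x` are infinitely many
injective orbits with pairwise disjoint ranges, because the binomials `X^n + X^(n+i+1)` are pairwise
distinct. -/

open Polynomial

section OrbitNumber

variable {A : Type*} {f : A → A}

lemma IsOrbit.eq_iterate {a : ℕ → A} (ha : IsOrbit f a) (n : ℕ) : a n = f^[n] (a 0) := by
  induction n with
  | zero => rfl
  | succ n ih => rw [← ha n, ih, iterate_succ_apply']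

lemma not_hasDisjointOrbits_of_iterate_eq {n m : ℕ} (hnm : n < m) (h : f^[n] = f^[m])
    {k : ℕ} (hk : 1 ≤ k) : ¬ HasDisjointOrbits f k := by
  rintro ⟨a, ha, -⟩
  obtain ⟨horb, hinj⟩ := ha ⟨0, hk⟩
  have : a ⟨0, hk⟩ n = a ⟨0, hk⟩ m := by rw [horb.eq_iterate n, horb.eq_iterate m, h]
  exact hnm.ne (hinj this)

lemma entSet_eq_zero_of_forall_not_hasDisjointOrbits
    (h : ∀ k, 1 ≤ k → ¬ HasDisjointOrbits f k) : entSet f = 0 := by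
  refine sSup_eq_bot.mpr ?_
  rintro _ (rfl | ⟨k, rfl, hk, hf⟩)
  · rfl
  · exact absurd hf (h k hk)

lemma entSet_eq_top_of_forall_hasDisjointOrbits (h : ∀ k, HasDisjointOrbits f k) :
    entSet f = ⊤ := by
  refine sSup_eq_top.mpr fun b hb => ?_
  lift b to ℕ using hb.ne
  exact ⟨(b + 1 : ℕ), Or.inr ⟨b + 1, rfl, by omega, h (b + 1)⟩, by exact_mod_cast b.lt_succ_self⟩

end OrbitNumber

lemma Polynomial.X_pow_add_X_pow_inj {R : Type*} [Semiring R] [Nontrivial R] {a b c d : ℕ}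
    (hab : a < b) (hcd : c < d) (h : (X ^ a + X ^ b : R[X]) = X ^ c + X ^ d) :
    a = c ∧ b = d := by
  have hs : ({a, b} : Finset ℕ) = {c, d} := by
    have h1 : (1 : R) ≠ 0 := one_ne_zero
    rw [← one_mul (X ^ a), ← one_mul (X ^ b), ← one_mul (X ^ c), ← one_mul (X ^ d), ← C_1] at h
    rw [← support_binomial hab.ne h1 h1, h, support_binomial hcd.ne h1 h1]
  have ha : a ∈ ({c, d} : Finset ℕ) := hs ▸ by simp
  have hb : b ∈ ({c, d} : Finset ℕ) := hs ▸ by simp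
  have hc : c ∈ ({a, b} : Finset ℕ) := hs ▸ by simp
  have hd : d ∈ ({a, b} : Finset ℕ) := hs ▸ by simp
  simp only [Finset.mem_insert, Finset.mem_singleton] at ha hb hc hd
  omega

section Algebra

variable {F V : Type*} [Field F] [AddCommGroup V] [Module F V]

lemma Module.End.hasDisjointOrbits_of_aeval_injective {L : Module.End F V} {x : V}
    (hx : Function.Injective fun p : F[X] => aeval L p x) (k : ℕ) : HasDisjointOrbits L k := by
  refine ⟨fun i n => aeval L (X ^ n + X ^ (n + (i : ℕ) + 1) : F[X]) x,
    fun i => ⟨fun n => ?_, fun n m h => ?_⟩, fun i j hij => Set.disjoint_left.mpr ?_⟩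
  · have hX : (X : F[X]) * (X ^ n + X ^ (n + (i : ℕ) + 1)) =
        X ^ (n + 1) + X ^ (n + 1 + (i : ℕ) + 1) := by ring
    dsimp only
    rw [← hX, map_mul, aeval_X, Module.End.mul_apply]
  · exact (X_pow_add_X_pow_inj (by omega) (by omega) (hx h)).1
  · rintro _ ⟨n, rfl⟩ ⟨m, h⟩
    have := X_pow_add_X_pow_inj (by omega) (by omega) (hx h)
    exact hij (Fin.ext (by omega)).symm

lemma Module.End.isIntegral_of_finite_quotient_ker_aeval {L : Module.End F V} {q : F[X]}
    (hq : q ≠ 0) [Finite (V ⧸ LinearMap.ker (aeval L q))] : IsIntegral F L := by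
  set W := LinearMap.ker (aeval L q)
  have hW : ∀ n, W ≤ W.comap (L ^ n) := fun n v hv => by
    have hcomm : Commute (L ^ n) (aeval L q) := by
      simpa using (commute_X_pow q n).map (aeval L)
    simp only [Submodule.mem_comap, LinearMap.mem_ker, W] at hv ⊢
    rw [← Module.End.mul_apply, ← hcomm.eq, Module.End.mul_apply, hv, map_zero]
  obtain ⟨a, b, hab, hL⟩ := Finite.exists_ne_map_eq_of_infinite fun n => ⇑(W.mapQ W _ (hW n))
  have hann : aeval L (q * (X ^ a - X ^ b)) = 0 := by
    ext v
    have := congrFun hL (Submodule.Quotient.mk v)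
    rw [Submodule.mapQ_apply, Submodule.mapQ_apply, Submodule.Quotient.eq] at this
    rwa [map_mul, Module.End.mul_apply, map_sub, aeval_X_pow, aeval_X_pow, LinearMap.sub_apply]
  exact isAlgebraic_iff_isIntegral.mp
    ⟨_, mul_ne_zero hq (sub_ne_zero.mpr fun h => hab (by simpa using congrArg natDegree h)), hann⟩

lemma IsIntegral.exists_pow_eq_pow {A : Type*} [Ring A] [Algebra F A] [Finite F] {a : A}
    (ha : IsIntegral F a) : ∃ n m, n < m ∧ a ^ n = a ^ m := by
  have : Module.Finite F (Algebra.adjoin F {a}) := .of_fg ha.fg_adjoin_singleton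
  have : Finite (Algebra.adjoin F {a}) := Module.finite_of_finite F
  obtain ⟨n, m, hnm, h⟩ := Finite.exists_ne_map_eq_of_infinite fun n : ℕ =>
    (⟨a, Algebra.self_mem_adjoin_singleton F a⟩ : Algebra.adjoin F {a}) ^ n
  have h' : a ^ n = a ^ m := congrArg Subtype.val h
  rcases hnm.lt_or_gt with hlt | hlt
  · exact ⟨n, m, hlt, h'⟩
  · exact ⟨m, n, hlt, h'.symm⟩

end Algebra

section Topology

variable {F V : Type*} [Field F] [AddCommGroup V] [Module F V] [TopologicalSpace V]
  [ContinuousConstSMul F V]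

lemma Module.End.continuous_aeval [ContinuousAdd V] {L : Module.End F V} (hL : Continuous L)
    (p : F[X]) : Continuous (aeval L p) := by
  induction p using Polynomial.induction_on' with
  | add p q hp hq => rw [map_add]; exact hp.add hq
  | monomial n c =>
    have : ⇑(aeval L (monomial n c)) = c • (⇑L)^[n] := by
      ext v; simp [aeval_monomial, Module.algebraMap_end_apply, Module.End.coe_pow]
    exact this ▸ (hL.iterate n).const_smul c

lemma Module.End.exists_isOpen_ker_aeval [IsTopologicalAddGroup V] [BaireSpace V] [T1Space V]
    [Countable F] {L : Module.End F V} (hL : Continuous L)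
    (h : ∀ x, ∃ p : F[X], aeval L p x = 0 ∧ p ≠ 0) :
    ∃ q : F[X], q ≠ 0 ∧ IsOpen (LinearMap.ker (aeval L q) : Set V) := by
  have : Countable F[X] := (AddMonoidAlgebra.coeff_injective.comp toFinsupp_injective).countable
  obtain ⟨⟨q, hq⟩, x, hx⟩ := nonempty_interior_of_iUnion_of_closed
    (f := fun q : {q : F[X] // q ≠ 0} => (LinearMap.ker (aeval L q.1) : Set V))
    (fun q => isClosed_singleton.preimage (continuous_aeval hL q.1))
    (Set.eq_univ_of_forall fun x => Set.mem_iUnion.mpr <|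
      let ⟨p, hp, hp0⟩ := h x; ⟨⟨p, hp0⟩, hp⟩)
  exact ⟨q, hq, (LinearMap.ker (aeval L q)).toAddSubgroup.isOpen_of_mem_nhds
    (mem_interior_iff_mem_nhds.mp hx)⟩

theorem Module.End.isIntegral_of_forall_exists_aeval_eq_zero [IsTopologicalAddGroup V]
    [CompactSpace V] [T2Space V] [Countable F] {L : Module.End F V} (hL : Continuous L)
    (h : ∀ x, ∃ p : F[X], aeval L p x = 0 ∧ p ≠ 0) : IsIntegral F L := by
  obtain ⟨q, hq, hopen⟩ := exists_isOpen_ker_aeval hL h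
  have : Finite (V ⧸ LinearMap.ker (aeval L q)) := AddSubgroup.quotient_finite_of_isOpen _ hopen
  exact isIntegral_of_finite_quotient_ker_aeval hq

end Topology

section WeightedShift

variable {F Γ : Type*} [Field F]

def wshiftLinearMap (φ : Γ → Γ) (w : Γ → F) : Module.End F (Γ → F) where
  toFun := wshift φ w
  map_add' x y := funext fun α => mul_add (w α) (x (φ α)) (y (φ α))
  map_smul' c x := funext fun α => mul_left_comm (w α) c (x (φ α))

lemma coe_wshiftLinearMap (φ : Γ → Γ) (w : Γ → F) : ⇑(wshiftLinearMap φ w) = wshift φ w := rfl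

lemma exists_aeval_wshiftLinearMap_injective [Finite F] {φ : Γ → Γ} {w : Γ → F}
    (h : ¬ ∃ m n : ℕ, 1 ≤ n ∧ n < m ∧ (wshift φ w)^[n] = (wshift φ w)^[m]) :
    ∃ x : Γ → F, Injective fun p : F[X] => aeval (wshiftLinearMap φ w) p x := by
  by_contra! hall
  have hann (x : Γ → F) : ∃ p : F[X], aeval (wshiftLinearMap φ w) p x = 0 ∧ p ≠ 0 := by
    obtain ⟨p, q, hpq, hne⟩ := not_injective_iff.mp (hall x)
    exact ⟨p - q, by simp [hpq], sub_ne_zero.mpr hne⟩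
  let _ : TopologicalSpace F := ⊥
  have : DiscreteTopology F := ⟨rfl⟩
  have hcont : Continuous (wshiftLinearMap φ w) :=
    continuous_pi fun α => (continuous_apply (φ α)).const_smul (w α)
  obtain ⟨n, m, hnm, hpow⟩ :=
    (Module.End.isIntegral_of_forall_exists_aeval_eq_zero hcont hann).exists_pow_eq_pow
  refine h ⟨m + 1, n + 1, by omega, by omega, ?_⟩
  rw [← coe_wshiftLinearMap, ← Module.End.coe_pow, ← Module.End.coe_pow, pow_succ, pow_succ,
    hpow]

end WeightedShift

theorem stmt_4_general {F : Type*} [Field F] [Fintype F] {Γ : Type*}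
    (φ : Γ → Γ) (w : Γ → F) :
    ((∃ m n : ℕ, 1 ≤ n ∧ n < m ∧ (wshift φ w)^[n] = (wshift φ w)^[m]) →
      entSet (wshift φ w) = 0) ∧
    ((¬ ∃ m n : ℕ, 1 ≤ n ∧ n < m ∧ (wshift φ w)^[n] = (wshift φ w)^[m]) →
      entSet (wshift φ w) = ⊤) ∧
    (entSet (wshift φ w) = 0 ∨ entSet (wshift φ w) = ⊤) ∧
    (entSet (wshift φ w) = 0 ↔
      ∃ m n : ℕ, 1 ≤ n ∧ n < m ∧ (wshift φ w)^[n] = (wshift φ w)^[m]) := by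
  have hzero : (∃ m n : ℕ, 1 ≤ n ∧ n < m ∧ (wshift φ w)^[n] = (wshift φ w)^[m]) →
      entSet (wshift φ w) = 0 := fun ⟨_, _, _, hnm, h⟩ =>
    entSet_eq_zero_of_forall_not_hasDisjointOrbits fun _ =>
      not_hasDisjointOrbits_of_iterate_eq hnm h
  have htop : (¬ ∃ m n : ℕ, 1 ≤ n ∧ n < m ∧ (wshift φ w)^[n] = (wshift φ w)^[m]) →
      entSet (wshift φ w) = ⊤ := fun h =>
    let ⟨_, hx⟩ := exists_aeval_wshiftLinearMap_injective h
    entSet_eq_top_of_forall_hasDisjointOrbits (Module.End.hasDisjointOrbits_of_aeval_injective hx)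
  refine ⟨hzero, htop, (em _).imp hzero htop, fun h => ?_, hzero⟩
  by_contra hqp
  simp [htop hqp] at h

/-- `ent_set(σ_{φ,𝔴}) = 𝗈(σ_{φ,𝔴})` is `0` if `σ_{φ,𝔴}^n = σ_{φ,𝔴}^m` for some `m > n ≥ 1`,
and `+∞` otherwise; in particular it is `0` or `+∞`, and it is `0` iff `σ_{φ,𝔴}` is
quasi-periodic. -/
theorem stmt_4 {F : Type*} [Field F] [Fintype F] {Γ : Type*} [Nonempty Γ]
    (φ : Γ → Γ) (w : Γ → F) :
    ((∃ m n : ℕ, 1 ≤ n ∧ n < m ∧ (wshift φ w)^[n] = (wshift φ w)^[m]) →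
      entSet (wshift φ w) = 0) ∧
    ((¬ ∃ m n : ℕ, 1 ≤ n ∧ n < m ∧ (wshift φ w)^[n] = (wshift φ w)^[m]) →
      entSet (wshift φ w) = ⊤) ∧
    (entSet (wshift φ w) = 0 ∨ entSet (wshift φ w) = ⊤) ∧
    (entSet (wshift φ w) = 0 ↔
      ∃ m n : ℕ, 1 ≤ n ∧ n < m ∧ (wshift φ w)^[n] = (wshift φ w)^[m]) :=
  stmt_4_general φ w
end

section
/- The following are equivalent: (1) σ_{φ,𝔴} : F^Γ → F^Γ is finite fibre; (2) Γ \ φ(Γ \ 𝔷) is finite; (3) there exists N ≥ 1 such that |σ_{φ,𝔴}^{-1}(x)| ≤ N for every x ∈ F^Γ. In particular, if 𝔴_α ≠ 0 for every α ∈ Γ, then σ_{φ,𝔴} is finite fibre if and only if σ_φ is finite fibre if and only if Γ \ φ(Γ) is finite. -/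
open Function Set

/-- `f` is finite fibre if every fibre `f⁻¹(y)` is finite. -/
def FiniteFibre {A : Type*} (f : A → A) : Prop := ∀ y : A, (f ⁻¹' {y}).Finite

lemma aux_compl_finite {F : Type*} [Field F] {Γ : Type*} (φ : Γ → Γ) (w : Γ → F)
    (h : ((wshift φ w) ⁻¹' {0}).Finite) :
    (Set.univ \ (φ '' {α | w α ≠ 0})).Finite := by
  classical
  set S := φ '' {α | w α ≠ 0}
  set g : Γ → (Γ → F) := fun β γ => if γ = β then 1 else 0 with hg
  have hsub : g '' (Set.univ \ S) ⊆ (wshift φ w) ⁻¹' {0} := by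
    rintro _ ⟨β, hβ, rfl⟩
    simp only [mem_preimage, mem_singleton_iff]
    funext α
    by_cases hw : w α = 0
    · simp [wshift, hw]
    · have : φ α ∈ S := ⟨α, hw, rfl⟩
      have hne : φ α ≠ β := fun he => hβ.2 (he ▸ this)
      simp [wshift, g, hne]
  have hinj : Set.InjOn g (Set.univ \ S) := by
    intro a _ b _ hab
    have := congrFun hab a
    simp only [g, if_pos rfl] at this
    by_contra hne
    rw [if_neg hne] at this
    exact one_ne_zero (α := F) this
  exact (h.subset hsub).of_finite_image hinj

lemma aux_injOn {F : Type*} [Field F] {Γ : Type*} (φ : Γ → Γ) (w : Γ → F) (y : Γ → F) :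
    Set.InjOn (fun (x : Γ → F) (β : ↥(Set.univ \ (φ '' {α | w α ≠ 0}))) => x β)
      ((wshift φ w) ⁻¹' {y}) := by
  intro x hx x' hx' hxx
  simp only [mem_preimage, mem_singleton_iff] at hx hx'
  funext γ
  by_cases hγ : γ ∈ φ '' {α | w α ≠ 0}
  · obtain ⟨α, hw, rfl⟩ := hγ
    have h1 : w α * x (φ α) = w α * x' (φ α) := by
      rw [show w α * x (φ α) = wshift φ w x α from rfl, hx,
        show w α * x' (φ α) = wshift φ w x' α from rfl, hx']
    exact mul_left_cancel₀ hw h1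
  · exact congrFun hxx ⟨γ, ⟨trivial, hγ⟩⟩

/-- `σ_{φ,𝔴}` is finite fibre iff `Γ \ φ(Γ \ 𝔷)` is finite iff all fibres have at most `N`
elements for some `N ≥ 1`; and if `𝔴` is nowhere zero, `σ_{φ,𝔴}` is finite fibre iff `σ_φ`
is finite fibre iff `Γ \ φ(Γ)` is finite. -/
theorem stmt_6 {F : Type*} [Field F] [Fintype F] {Γ : Type*} [Nonempty Γ]
    (φ : Γ → Γ) (w : Γ → F) :
    (FiniteFibre (wshift φ w) ↔ (Set.univ \ (φ '' {α | w α ≠ 0})).Finite) ∧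
    (FiniteFibre (wshift φ w) ↔
      ∃ N : ℕ, 1 ≤ N ∧ ∀ x : Γ → F, ((wshift φ w) ⁻¹' {x}).encard ≤ (N : ℕ∞)) ∧
    ((∀ α : Γ, w α ≠ 0) →
      (FiniteFibre (wshift φ w) ↔ FiniteFibre (wshift φ (1 : Γ → F))) ∧
      (FiniteFibre (wshift φ w) ↔ (Set.univ \ Set.range φ).Finite)) := by
  have key : ∀ v : Γ → F,
      FiniteFibre (wshift φ v) ↔ (Set.univ \ (φ '' {α | v α ≠ 0})).Finite := by
    intro v
    constructor
    · intro h
      exact aux_compl_finite φ v (h 0)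
    · intro h y
      haveI : Finite ↥(Set.univ \ (φ '' {α | v α ≠ 0})) := h
      exact Set.Finite.of_finite_image (Set.toFinite _) (aux_injOn φ v y)
  refine ⟨key w, ?_, ?_⟩
  · constructor
    · intro h
      have hc := aux_compl_finite φ w (h 0)
      haveI : Finite ↥(Set.univ \ (φ '' {α | w α ≠ 0})) := hc
      haveI : Fintype ↥(Set.univ \ (φ '' {α | w α ≠ 0})) := Fintype.ofFinite _
      refine ⟨Nat.card (↥(Set.univ \ (φ '' {α | w α ≠ 0})) → F), Nat.card_pos, fun y => ?_⟩
      calc ((wshift φ w) ⁻¹' {y}).encard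
          = ((fun (x : Γ → F) (β : ↥(Set.univ \ (φ '' {α | w α ≠ 0}))) => x β) ''
              ((wshift φ w) ⁻¹' {y})).encard := ((aux_injOn φ w y).encard_image).symm
        _ ≤ (Set.univ : Set (↥(Set.univ \ (φ '' {α | w α ≠ 0})) → F)).encard :=
            Set.encard_le_encard (Set.subset_univ _)
        _ = _ := by
            rw [Set.encard_univ]
            simp [ENat.card_eq_coe_natCard]
    · rintro ⟨N, _, hN⟩ y
      exact Set.encard_lt_top_iff.mp ((hN y).trans_lt (WithTop.coe_lt_top N))
  · intro hw
    have h1 : {α | w α ≠ 0} = Set.univ := by ext α; simp [hw α]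
    have h2 : {α | (1 : Γ → F) α ≠ 0} = Set.univ := by
      ext α; simp [one_ne_zero (α := F)]
    constructor
    · rw [key w, key 1, h1, h2]
    · rw [key w, h1, Set.image_univ]
end

section
/- The set Λ is φ-invariant, i.e. φ(Λ) ⊆ Λ, and if σ_{φ,𝔴} : F^Γ → F^Γ is finite fibre, then the weighted generalized shift σ_{φ|Λ, 𝔴^Λ} : F^Λ → F^Λ is finite fibre as well. -/
open Function Set

/-- `Λ = Γ \ Υ`, where `Υ = ∪_{n≥0} φ⁻ⁿ(𝔷)` and `𝔷 = {α : 𝔴_α = 0}`;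
i.e. `Λ = {α : 𝔴_{φⁿ(α)} ≠ 0 for all n ≥ 0}`. -/
def LambdaSet {F : Type*} [Field F] {Γ : Type*} (φ : Γ → Γ) (w : Γ → F) : Set Γ :=
  {α | ∀ n : ℕ, w (φ^[n] α) ≠ 0}

/-- The restriction `φ|Λ : Λ → Λ` (well-defined since `φ(Λ) ⊆ Λ`). -/
def lamRes {F : Type*} [Field F] {Γ : Type*} (φ : Γ → Γ) (w : Γ → F) :
    LambdaSet φ w → LambdaSet φ w :=
  fun a => ⟨φ a.1, by
    intro n
    rw [← Function.iterate_succ_apply]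
    exact a.2 (n + 1)⟩

/-- `Λ` is `φ`-invariant, and if `σ_{φ,𝔴} : F^Γ → F^Γ` is finite fibre then
`σ_{φ|Λ, 𝔴^Λ} : F^Λ → F^Λ` is finite fibre as well. -/
theorem stmt_7 {F : Type*} [Field F] [Fintype F] {Γ : Type*} [Nonempty Γ]
    (φ : Γ → Γ) (w : Γ → F) :
    (∀ α ∈ LambdaSet φ w, φ α ∈ LambdaSet φ w) ∧
    (FiniteFibre (wshift φ w) →
      FiniteFibre (wshift (lamRes φ w) (fun a => w a.1))) := by
  constructor
  · intro α hα n
    rw [← Function.iterate_succ_apply]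
    exact hα (n + 1)
  · intro h y
    classical
    let Λ := LambdaSet φ w
    let e : (Λ → F) → (Γ → F) := fun x α => if hα : α ∈ Λ then x ⟨α, hα⟩ else 0
    have hinj : Function.Injective e := by
      intro a b hab
      funext i
      have := congrFun hab i.1
      simpa [e, i.2] using this
    have hmap : ∀ x ∈ (wshift (lamRes φ w) (fun a => w a.1)) ⁻¹' {y},
        e x ∈ (wshift φ w) ⁻¹' {e y} := by
      intro x hx
      simp only [mem_preimage, mem_singleton_iff] at hx ⊢
      funext α
      by_cases hα : α ∈ Λ
      · have hφα : φ α ∈ Λ := by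
          intro n
          rw [← Function.iterate_succ_apply]
          exact hα (n + 1)
        have hx' := congrFun hx ⟨α, hα⟩
        simpa [wshift, e, hα, hφα, lamRes] using hx'
      · have h0 : w α * e x (φ α) = 0 := by
          by_cases h1 : w α = 0
          · simp [h1]
          · have hφ : φ α ∉ Λ := by
              intro hc
              apply hα
              intro n
              cases n with
              | zero => simpa using h1
              | succ m => rw [Function.iterate_succ_apply]; exact hc m
            simp [e, hφ]
        simpa [wshift, e, hα] using h0
    have hfin := (h (e y)).subset (image_subset_iff.mpr hmap)
    exact Set.Finite.of_finite_image hfin hinj.injOn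
end

section
/- The infinite anti-orbit numbers satisfy 𝖺(σ_{φ,𝔴}) = 𝖺(σ_{φ|Λ, 𝔴^Λ}). In particular, if σ_{φ,𝔴} : F^Γ → F^Γ is finite fibre, then ent_cset(σ_{φ,𝔴}) = ent_cset(σ_{φ|Λ, 𝔴^Λ}). -/
open Function Set

/-- An `f`-anti-orbit: a sequence with `f (a (n+1)) = a n` for all `n`. -/
def IsAntiOrbit {A : Type*} (f : A → A) (a : ℕ → A) : Prop := ∀ n : ℕ, f (a (n + 1)) = a n

/-- There exist `m` injective `f`-anti-orbits with pairwise disjoint ranges. -/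
def HasDisjointAntiOrbits {A : Type*} (f : A → A) (m : ℕ) : Prop :=
  ∃ a : Fin m → ℕ → A, (∀ i, IsAntiOrbit f (a i) ∧ Function.Injective (a i)) ∧
    ∀ i j, i ≠ j → Disjoint (Set.range (a i)) (Set.range (a j))

/-- The infinite anti-orbit number `𝖺(f) ∈ ℕ ∪ {+∞}`. -/
noncomputable def antiOrbitNumber {A : Type*} (f : A → A) : ℕ∞ :=
  sSup ({0} ∪ {m : ℕ∞ | ∃ k : ℕ, m = (k : ℕ∞) ∧ 1 ≤ k ∧ HasDisjointAntiOrbits f k})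

/-- Contravariant set-theoretical entropy (for finite fibre `f`): `ent_cset f = 𝖺(f)`. -/
noncomputable def entCset {A : Type*} (f : A → A) : ℕ∞ := antiOrbitNumber f

section Aux

variable {F : Type*} [Field F] {Γ : Type*} (φ : Γ → Γ) (w : Γ → F)

open Classical in
/-- Extension by zero from `F^Λ` to `F^Γ`. -/
noncomputable def extFn (y : LambdaSet φ w → F) : Γ → F :=
  fun α => if h : α ∈ LambdaSet φ w then y ⟨α, h⟩ else 0

lemma extFn_inj : Function.Injective (extFn φ w) := by
  intro y z h
  funext a
  have := congrFun h a.1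
  simpa [extFn, a.2] using this

/-- `extFn` semiconjugates the restricted shift to the full shift. -/
lemma extFn_conj (y : LambdaSet φ w → F) :
    wshift φ w (extFn φ w y) = extFn φ w (wshift (lamRes φ w) (fun a => w a.1) y) := by
  funext α
  by_cases h : α ∈ LambdaSet φ w
  · have hφ : φ α ∈ LambdaSet φ w := (lamRes φ w ⟨α, h⟩).2
    simp [wshift, extFn, h, hφ, lamRes]
  · have hex : ∃ n, w (φ^[n] α) = 0 := by
      by_contra hc
      push_neg at hc
      exact h hc
    obtain ⟨n, hn⟩ := hex
    have hrhs : extFn φ w (wshift (lamRes φ w) (fun a => w a.1) y) α = 0 := by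
      simp [extFn, h]
    rw [hrhs]
    rcases n with _ | n
    · simp only [Function.iterate_zero, id] at hn
      simp [wshift, hn]
    · have hφ : φ α ∉ LambdaSet φ w := by
        intro hc
        exact hc n (by rwa [← Function.iterate_succ_apply])
      simp [wshift, extFn, hφ]

lemma shift_iter_zero : ∀ (n : ℕ) (α : Γ) (x : Γ → F), w (φ^[n] α) = 0 →
    (wshift φ w)^[n+1] x α = 0 := by
  intro n
  induction n with
  | zero =>
    intro α x h
    simp only [Function.iterate_zero, id] at h
    simp [wshift, h]
  | succ n ih =>
    intro α x h
    rw [Function.iterate_succ_apply']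
    show w α * ((wshift φ w)^[n+1] x) (φ α) = 0
    rw [ih (φ α) x (by rwa [← Function.iterate_succ_apply]), mul_zero]

lemma anti_iter {A : Type*} {f : A → A} {a : ℕ → A} (h : IsAntiOrbit f a) (k : ℕ) :
    ∀ m : ℕ, f^[m] (a (k + m)) = a k := by
  intro m
  induction m with
  | zero => rfl
  | succ m ih =>
    show f^[m] (f (a (k + m + 1))) = a k
    rw [h (k + m)]
    exact ih

/-- Every point on an anti-orbit of the shift vanishes off `Λ`. -/
lemma anti_vanish {a : ℕ → Γ → F} (h : IsAntiOrbit (wshift φ w) a) (k : ℕ) {α : Γ}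
    (hα : α ∉ LambdaSet φ w) : a k α = 0 := by
  have hex : ∃ n, w (φ^[n] α) = 0 := by
    by_contra hc
    push_neg at hc
    exact hα hc
  obtain ⟨n, hn⟩ := hex
  have := anti_iter h k (n + 1)
  rw [← this]
  exact shift_iter_zero φ w n α _ hn

lemma anti_eq_ext {a : ℕ → Γ → F} (h : IsAntiOrbit (wshift φ w) a) (k : ℕ) :
    a k = extFn φ w (fun b => a k b.1) := by
  funext α
  by_cases hα : α ∈ LambdaSet φ w
  · simp [extFn, hα]
  · simp [extFn, hα, anti_vanish φ w h k hα]

lemma hasDisjoint_iff (m : ℕ) :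
    HasDisjointAntiOrbits (wshift φ w) m ↔
      HasDisjointAntiOrbits (wshift (lamRes φ w) (fun a => w a.1)) m := by
  constructor
  · rintro ⟨a, h1, h2⟩
    refine ⟨fun i n b => a i n b.1, fun i => ⟨?_, ?_⟩, ?_⟩
    · intro n
      funext b
      show w b.1 * a i (n + 1) (φ b.1) = a i n b.1
      have := congrFun ((h1 i).1 n) b.1
      simpa [wshift] using this
    · intro n m hnm
      apply (h1 i).2
      have hb : (fun b : LambdaSet φ w => a i n b.1) = fun b => a i m b.1 := hnm
      rw [anti_eq_ext φ w (h1 i).1 n, anti_eq_ext φ w (h1 i).1 m, hb]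
    · intro i j hij
      rw [Set.disjoint_left]
      rintro y ⟨n, rfl⟩ ⟨p, hp⟩
      have hb : (fun b : LambdaSet φ w => a j p b.1) = fun b => a i n b.1 := hp
      have : a i n = a j p := by
        rw [anti_eq_ext φ w (h1 i).1 n, anti_eq_ext φ w (h1 j).1 p, hb]
      exact Set.disjoint_left.1 (h2 i j hij) ⟨n, rfl⟩ ⟨p, this.symm⟩
  · rintro ⟨b, h1, h2⟩
    refine ⟨fun i => extFn φ w ∘ b i, fun i => ⟨?_, ?_⟩, ?_⟩
    · intro n
      show wshift φ w (extFn φ w (b i (n + 1))) = extFn φ w (b i n)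
      rw [extFn_conj, (h1 i).1 n]
    · exact (extFn_inj φ w).comp (h1 i).2
    · intro i j hij
      rw [Set.disjoint_left]
      rintro y ⟨n, rfl⟩ ⟨p, hp⟩
      have : b i n = b j p := extFn_inj φ w (hp.symm)
      exact Set.disjoint_left.1 (h2 i j hij) ⟨n, rfl⟩ ⟨p, this.symm⟩

end Aux

/-- `𝖺(σ_{φ,𝔴}) = 𝖺(σ_{φ|Λ, 𝔴^Λ})`; in particular if `σ_{φ,𝔴}` is finite fibre then
`ent_cset(σ_{φ,𝔴}) = ent_cset(σ_{φ|Λ, 𝔴^Λ})`. -/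
theorem stmt_8 {F : Type*} [Field F] [Fintype F] {Γ : Type*} [Nonempty Γ]
    (φ : Γ → Γ) (w : Γ → F) :
    antiOrbitNumber (wshift φ w) = antiOrbitNumber (wshift (lamRes φ w) (fun a => w a.1)) ∧
    (FiniteFibre (wshift φ w) →
      entCset (wshift φ w) = entCset (wshift (lamRes φ w) (fun a => w a.1))) := by
  have key : antiOrbitNumber (wshift φ w)
      = antiOrbitNumber (wshift (lamRes φ w) (fun a => w a.1)) := by
    unfold antiOrbitNumber
    congr 1
    ext m
    simp only [Set.mem_union, Set.mem_setOf_eq]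
    constructor
    · rintro (h | ⟨k, rfl, hk, hd⟩)
      · exact Or.inl h
      · exact Or.inr ⟨k, rfl, hk, (hasDisjoint_iff φ w k).1 hd⟩
    · rintro (h | ⟨k, rfl, hk, hd⟩)
      · exact Or.inl h
      · exact Or.inr ⟨k, rfl, hk, (hasDisjoint_iff φ w k).2 hd⟩
  exact ⟨key, fun _ => key⟩
end

section
/- Suppose 𝔴_α ≠ 0 for every α ∈ Γ and σ_{φ,𝔴} : F^Γ → F^Γ is finite fibre. If φ has a non-quasi-periodic point, or if Per(φ) ≠ ∅ and sup{per(α) : α ∈ Per(φ)} = +∞, then ent_cset(σ_{φ,𝔴}) = ent_cset(σ_φ) = +∞, i.e. 𝖺(σ_{φ,𝔴}) = 𝖺(σ_φ) = +∞. -/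
open Function Set

/-- `Per f`: the set of periodic points of `f`. -/
def PerSet {A : Type*} (f : A → A) : Set A := {x | ∃ n : ℕ, 1 ≤ n ∧ f^[n] x = x}

/-- `per x`: the period of a periodic point `x`. -/
noncomputable def perOf {A : Type*} (f : A → A) (x : A) : ℕ :=
  sInf {n : ℕ | 1 ≤ n ∧ f^[n] x = x}

/-- `x` is a quasi-periodic point of `f` if `f^n(x) = f^m(x)` for some `m > n ≥ 1`. -/
def QuasiPeriodicPt {A : Type*} (f : A → A) (x : A) : Prop :=
  ∃ n m : ℕ, 1 ≤ n ∧ n < m ∧ f^[n] x = f^[m] x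
namespace Stmt11Aux

variable {F : Type*} [Field F] {Γ : Type*}

noncomputable def aval (φ : Γ → Γ) (w : Γ → F) (β : ℕ → ℕ → Γ) (j k n : ℕ) (α : Γ) : F :=
  (∏ i ∈ Finset.range k, w (φ^[i] α)) * (∏ i ∈ Finset.range (n + k), w (β j i))⁻¹

open Classical in
noncomputable def aDef (φ : Γ → Γ) (w : Γ → F) (β : ℕ → ℕ → Γ) (n : ℕ) (α : Γ) : F :=
  if h : ∃ jk : ℕ × ℕ, φ^[jk.2] α = β jk.1 (n + jk.2) then
    aval φ w β h.choose.1 h.choose.2 n α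
  else 0

section Basic

variable {φ : Γ → Γ} {w : Γ → F} {β : ℕ → ℕ → Γ}

lemma prodw_ne_zero (hw : ∀ α, w α ≠ 0) (f : ℕ → Γ) (k : ℕ) :
    (∏ i ∈ Finset.range k, w (f i)) ≠ 0 :=
  Finset.prod_ne_zero_iff.mpr fun _ _ => hw _

lemma aval_ne_zero (hw : ∀ α, w α ≠ 0) (j k n : ℕ) (α : Γ) : aval φ w β j k n α ≠ 0 :=
  mul_ne_zero (prodw_ne_zero hw _ _) (inv_ne_zero (prodw_ne_zero hw _ _))

lemma witness_succ (hβ : ∀ j m, φ (β j m) = β j (m + 1)) {j k n : ℕ} {α : Γ}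
    (h : φ^[k] α = β j (n + k)) : φ^[k+1] α = β j (n + (k+1)) := by
  rw [Function.iterate_succ_apply', h, hβ]
  exact congrArg (β j) (by omega)

lemma aval_succ (hw : ∀ α, w α ≠ 0) {j k n : ℕ} {α : Γ}
    (h : φ^[k] α = β j (n + k)) :
    aval φ w β j (k+1) n α = aval φ w β j k n α := by
  have hU : (∏ i ∈ Finset.range (n+k), w (β j i)) ≠ 0 := prodw_ne_zero hw _ _
  have hc : w (β j (n+k)) ≠ 0 := hw _
  show (∏ i ∈ Finset.range (k+1), w (φ^[i] α)) * (∏ i ∈ Finset.range (n+(k+1)), w (β j i))⁻¹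
      = (∏ i ∈ Finset.range k, w (φ^[i] α)) * (∏ i ∈ Finset.range (n+k), w (β j i))⁻¹
  rw [show n + (k+1) = (n+k)+1 from rfl, Finset.prod_range_succ, Finset.prod_range_succ, h,
    mul_inv]
  field_simp

lemma aval_ge (hw : ∀ α, w α ≠ 0) (hβ : ∀ j m, φ (β j m) = β j (m + 1))
    {j k n : ℕ} {α : Γ} (h : φ^[k] α = β j (n + k)) :
    ∀ d, φ^[k+d] α = β j (n + (k+d)) ∧ aval φ w β j (k+d) n α = aval φ w β j k n α := by
  intro d
  induction d with
  | zero => exact ⟨h, rfl⟩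
  | succ d ih =>
    refine ⟨?_, ?_⟩
    · exact witness_succ hβ ih.1
    · rw [show k+(d+1) = (k+d)+1 from rfl, aval_succ hw ih.1, ih.2]

lemma aval_welldef (hw : ∀ α, w α ≠ 0) (hβ : ∀ j m, φ (β j m) = β j (m + 1))
    (hsep : ∀ j j' m m', β j m = β j' m' → β j = β j')
    {j k j' k' n : ℕ} {α : Γ}
    (h : φ^[k] α = β j (n + k)) (h' : φ^[k'] α = β j' (n + k')) :
    aval φ w β j k n α = aval φ w β j' k' n α := by
  wlog hkk : k ≤ k' generalizing j k j' k'
  · exact (this h' h (le_of_not_ge hkk)).symm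
  obtain ⟨d, rfl⟩ := Nat.exists_eq_add_of_le hkk
  obtain ⟨hwit, hval⟩ := aval_ge hw hβ h d
  rw [← hval]
  have hbb : β j = β j' := hsep _ _ _ _ (hwit.symm.trans h')
  simp only [aval, hbb]

lemma aDef_spec (hw : ∀ α, w α ≠ 0) (hβ : ∀ j m, φ (β j m) = β j (m + 1))
    (hsep : ∀ j j' m m', β j m = β j' m' → β j = β j')
    {j k n : ℕ} {α : Γ} (h : φ^[k] α = β j (n + k)) :
    aDef φ w β n α = aval φ w β j k n α := by
  have hex : ∃ jk : ℕ × ℕ, φ^[jk.2] α = β jk.1 (n + jk.2) := ⟨(j,k), h⟩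
  simp only [aDef]
  rw [dif_pos hex]
  exact aval_welldef hw hβ hsep hex.choose_spec h

lemma aDef_zero {n : ℕ} {α : Γ} (h : ¬ ∃ jk : ℕ × ℕ, φ^[jk.2] α = β jk.1 (n + jk.2)) :
    aDef φ w β n α = 0 := by
  simp only [aDef]
  rw [dif_neg h]

lemma aDef_step (hw : ∀ α, w α ≠ 0) (hβ : ∀ j m, φ (β j m) = β j (m + 1))
    (hsep : ∀ j j' m m', β j m = β j' m' → β j = β j') (n : ℕ) (α : Γ) :
    w α * aDef φ w β (n+1) (φ α) = aDef φ w β n α := by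
  by_cases h : ∃ jk : ℕ × ℕ, φ^[jk.2] (φ α) = β jk.1 ((n+1) + jk.2)
  · obtain ⟨⟨j, k⟩, hk⟩ := h
    have hk' : φ^[k] (φ α) = β j ((n+1) + k) := hk
    have hk1 : φ^[k+1] α = β j (n + (k+1)) := by
      rw [Function.iterate_succ_apply]
      rw [hk']
      congr 1
      omega
    rw [aDef_spec hw hβ hsep hk', aDef_spec hw hβ hsep hk1]
    show w α * ((∏ i ∈ Finset.range k, w (φ^[i] (φ α))) *
        (∏ i ∈ Finset.range ((n+1)+k), w (β j i))⁻¹)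
      = (∏ i ∈ Finset.range (k+1), w (φ^[i] α)) *
        (∏ i ∈ Finset.range (n+(k+1)), w (β j i))⁻¹
    have h1 : (∏ i ∈ Finset.range (k+1), w (φ^[i] α))
        = w α * ∏ i ∈ Finset.range k, w (φ^[i] (φ α)) := by
      rw [Finset.prod_range_succ']
      simp only [Function.iterate_succ_apply, Function.iterate_zero_apply]
      ring
    have h2 : (n+1)+k = n+(k+1) := by omega
    rw [h1, h2]
    ring
  · have h' : ¬ ∃ jk : ℕ × ℕ, φ^[jk.2] α = β jk.1 (n + jk.2) := by
      rintro ⟨⟨j,k⟩, hk⟩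
      apply h
      refine ⟨(j, k), ?_⟩
      show φ^[k] (φ α) = β j ((n+1) + k)
      rw [← Function.iterate_succ_apply]
      have := witness_succ hβ (hk : φ^[k] α = β j (n + k))
      rw [this]
      congr 1
      omega
    rw [aDef_zero h', aDef_zero h, mul_zero]

lemma iterate_beta (hβ : ∀ j m, φ (β j m) = β j (m + 1)) (j m k : ℕ) :
    φ^[k] (β j m) = β j (m + k) := by
  induction k with
  | zero => rfl
  | succ k ih =>
    rw [Function.iterate_succ_apply', ih, hβ]
    exact congrArg (β j) (by omega)

lemma aDef_at_beta_ne (hw : ∀ α, w α ≠ 0) (hβ : ∀ j m, φ (β j m) = β j (m + 1))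
    (hsep : ∀ j j' m m', β j m = β j' m' → β j = β j')
    {j m n : ℕ} (h : ∃ k, β j (m+k) = β j (n+k)) :
    aDef φ w β n (β j m) ≠ 0 := by
  obtain ⟨k, hk⟩ := h
  have hwit : φ^[k] (β j m) = β j (n+k) := by rw [iterate_beta hβ]; exact hk
  rw [aDef_spec hw hβ hsep hwit]
  exact aval_ne_zero hw _ _ _ _

lemma aDef_at_beta_zero (hβ : ∀ j m, φ (β j m) = β j (m + 1))
    (hsep : ∀ j j' m m', β j m = β j' m' → β j = β j')
    {j m n : ℕ} (h : ¬ ∃ k, β j (m+k) = β j (n+k)) :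
    aDef φ w β n (β j m) = 0 := by
  apply aDef_zero
  rintro ⟨⟨j', k⟩, hk⟩
  rw [iterate_beta hβ] at hk
  have hbb : β j = β j' := hsep _ _ _ _ hk
  exact h ⟨k, hk.trans (congrFun hbb (n+k)).symm⟩

lemma aDef_ne_zero_iff (hw : ∀ α, w α ≠ 0) (hβ : ∀ j m, φ (β j m) = β j (m + 1))
    (hsep : ∀ j j' m m', β j m = β j' m' → β j = β j') {p : ℕ → ℕ}
    (hR : ∀ j m n, (∃ k, β j (m+k) = β j (n+k)) ↔ m % p j = n % p j) (j m n : ℕ) :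
    aDef φ w β n (β j m) ≠ 0 ↔ m % p j = n % p j := by
  rw [← hR j m n]
  constructor
  · intro hne
    by_contra hcon
    exact hne (aDef_at_beta_zero hβ hsep hcon)
  · exact aDef_at_beta_ne hw hβ hsep

end Basic

lemma mod_helper {p B x y : ℕ} (hp : p = 0 ∨ B < p) (hx : x ≤ B) (hy : y ≤ B) :
    x % p = y % p ↔ x = y := by
  rcases hp with rfl | hp
  · simp
  · rw [Nat.mod_eq_of_lt (by omega), Nat.mod_eq_of_lt (by omega)]

lemma core (φ : Γ → Γ) (w : Γ → F) (hw : ∀ α, w α ≠ 0)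
    (β : ℕ → ℕ → Γ) (p : ℕ → ℕ)
    (hβ : ∀ j m, φ (β j m) = β j (m + 1))
    (hsep : ∀ j j' m m', β j m = β j' m' → β j = β j')
    (hR : ∀ j m n, (∃ k, β j (m+k) = β j (n+k)) ↔ m % p j = n % p j)
    (hp : ∀ B, ∃ j, p j = 0 ∨ B < p j)
    (M : ℕ) : HasDisjointAntiOrbits (wshift φ w) M := by
  set b : Fin M → ℕ → (Γ → F) :=
    fun i n α => aDef φ w β n α + aDef φ w β (n + i.1 + 1) α with hbdef
  have hval : ∀ (i : Fin M) (n j m B : ℕ), (p j = 0 ∨ B < p j) → n + i.1 + 1 ≤ B → m ≤ B →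
      (b i n (β j m) ≠ 0 ↔ (m = n ∨ m = n + i.1 + 1)) := by
    intro i n j m B hj hn hm
    have h1 : aDef φ w β n (β j m) ≠ 0 ↔ m = n := by
      rw [aDef_ne_zero_iff hw hβ hsep hR, mod_helper hj hm (by omega)]
    have h2 : aDef φ w β (n + i.1 + 1) (β j m) ≠ 0 ↔ m = n + i.1 + 1 := by
      rw [aDef_ne_zero_iff hw hβ hsep hR, mod_helper hj hm hn]
    show aDef φ w β n (β j m) + aDef φ w β (n + i.1 + 1) (β j m) ≠ 0 ↔ _
    by_cases e1 : m = n
    · have z2 : aDef φ w β (n + i.1 + 1) (β j m) = 0 := by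
        by_contra hz
        have := h2.mp hz
        omega
      rw [z2, add_zero]
      simp only [h1]
      omega
    · by_cases e2 : m = n + i.1 + 1
      · have z1 : aDef φ w β n (β j m) = 0 := by
          by_contra hz
          have := h1.mp hz
          omega
        rw [z1, zero_add]
        simp only [h2]
        omega
      · have z1 : aDef φ w β n (β j m) = 0 := by
          by_contra hz; exact e1 (h1.mp hz)
        have z2 : aDef φ w β (n + i.1 + 1) (β j m) = 0 := by
          by_contra hz; exact e2 (h2.mp hz)
        rw [z1, z2, add_zero]
        simp only [ne_eq, not_true_eq_false, false_iff]
        omega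
  have hlt_ne : ∀ (i : Fin M) (n n' : ℕ), n < n' → b i n ≠ b i n' := by
    intro i n n' hlt heq
    obtain ⟨j, hj⟩ := hp (n' + i.1 + 1)
    have h1 := hval i n j n (n' + i.1 + 1) hj (by omega) (by omega)
    have h2 := hval i n' j n (n' + i.1 + 1) hj (by omega) (by omega)
    have hne : b i n (β j n) ≠ 0 := h1.mpr (Or.inl rfl)
    rw [heq] at hne
    have := h2.mp hne
    omega
  refine ⟨b, fun i => ⟨?_, ?_⟩, ?_⟩
  · intro n
    funext α
    show w α * (aDef φ w β (n+1) (φ α) + aDef φ w β ((n+1) + i.1 + 1) (φ α))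
        = aDef φ w β n α + aDef φ w β (n + i.1 + 1) α
    have e : (n+1) + i.1 + 1 = (n + i.1 + 1) + 1 := by omega
    rw [e, mul_add, aDef_step hw hβ hsep, aDef_step hw hβ hsep]
  · intro n n' heq
    by_contra hne
    rcases Nat.lt_or_ge n n' with hlt | hge
    · exact hlt_ne i n n' hlt heq
    · exact hlt_ne i n' n (by omega) heq.symm
  · intro i i' hii
    rw [Set.disjoint_left]
    rintro x ⟨n, rfl⟩ ⟨n', hx⟩
    obtain ⟨j, hj⟩ := hp (n + n' + i.1 + i'.1 + 2)
    set B := n + n' + i.1 + i'.1 + 2 with hB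
    have he : ∀ m, m ≤ B → ((m = n' ∨ m = n' + i'.1 + 1) ↔ (m = n ∨ m = n + i.1 + 1)) := by
      intro m hm
      rw [← hval i' n' j m B hj (by omega) hm, ← hval i n j m B hj (by omega) hm, hx]
    have hvv : i.1 ≠ i'.1 := fun h' => hii (Fin.ext h')
    have c1 := (he n (by omega)).mpr (Or.inl rfl)
    have c2 := (he n' (by omega)).mp (Or.inl rfl)
    have c3 := (he (n + i.1 + 1) (by omega)).mpr (Or.inr rfl)
    omega

lemma antiOrbitNumber_eq_top_of {A : Type*} (f : A → A)
    (h : ∀ M, HasDisjointAntiOrbits f M) : antiOrbitNumber f = ⊤ := by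
  rw [antiOrbitNumber, sSup_eq_top]
  intro c hc
  lift c to ℕ using hc.ne
  refine ⟨((c+1 : ℕ) : ℕ∞), Set.mem_union_right _ ⟨c+1, rfl, by omega, h (c+1)⟩, ?_⟩
  exact_mod_cast Nat.lt_succ_self c

lemma case1 (φ : Γ → Γ) {α₀ : Γ} (h : ¬ QuasiPeriodicPt φ α₀) (w : Γ → F)
    (hw : ∀ α, w α ≠ 0) (M : ℕ) : HasDisjointAntiOrbits (wshift φ w) M := by
  have hinj : ∀ s t : ℕ, s < t → φ^[s] α₀ ≠ φ^[t] α₀ := by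
    intro s t hst he
    apply h
    rcases Nat.eq_zero_or_pos s with rfl | hs
    · have he0 : α₀ = φ^[t] α₀ := he
      refine ⟨1, t+1, le_refl 1, by omega, ?_⟩
      rw [Function.iterate_one, Function.iterate_succ_apply', ← he0]
    · exact ⟨s, t, hs, hst, he⟩
  apply core φ w hw (fun _ m => φ^[m] α₀) (fun _ => 0)
  · intro j m
    exact (Function.iterate_succ_apply' φ m α₀).symm
  · intro _ _ _ _ _
    rfl
  · intro j m n
    simp only [Nat.mod_zero]
    constructor
    · rintro ⟨k, hk⟩
      by_contra hmn
      rcases Nat.lt_or_ge m n with hlt | hge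
      · exact hinj (m+k) (n+k) (by omega) hk
      · exact hinj (n+k) (m+k) (by omega) hk.symm
    · rintro rfl
      exact ⟨0, rfl⟩
  · intro B
    exact ⟨0, Or.inl rfl⟩

noncomputable def pick (φ : Γ → Γ)
    (H : ∀ k : ℕ, ∃ α, α ∈ periodicPts φ ∧ k ≤ Function.minimalPeriod φ α) : ℕ → Γ :=
  fun j => Nat.rec (H 1).choose
    (fun _ prev => (H (Function.minimalPeriod φ prev + 1)).choose) j

lemma pick_mem (φ : Γ → Γ)
    (H : ∀ k : ℕ, ∃ α, α ∈ periodicPts φ ∧ k ≤ Function.minimalPeriod φ α) :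
    ∀ j, pick φ H j ∈ periodicPts φ
  | 0 => (H 1).choose_spec.1
  | (j+1) => (H _).choose_spec.1

lemma pick_lt (φ : Γ → Γ)
    (H : ∀ k : ℕ, ∃ α, α ∈ periodicPts φ ∧ k ≤ Function.minimalPeriod φ α) (j : ℕ) :
    Function.minimalPeriod φ (pick φ H j) < Function.minimalPeriod φ (pick φ H (j+1)) := by
  have h := (H (Function.minimalPeriod φ (pick φ H j) + 1)).choose_spec.2
  have : pick φ H (j+1) = (H (Function.minimalPeriod φ (pick φ H j) + 1)).choose := rfl
  rw [this]
  omega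

lemma case2 (φ : Γ → Γ)
    (H : ∀ k : ℕ, ∃ α, α ∈ periodicPts φ ∧ k ≤ Function.minimalPeriod φ α)
    (w : Γ → F) (hw : ∀ α, w α ≠ 0) (M : ℕ) :
    HasDisjointAntiOrbits (wshift φ w) M := by
  set γ : ℕ → Γ := pick φ H with hγ
  set p : ℕ → ℕ := fun j => Function.minimalPeriod φ (γ j) with hpdef
  have hmono : StrictMono p := strictMono_nat_of_lt_succ (pick_lt φ H)
  have hpos : ∀ j, 0 < p j :=
    fun j => Function.minimalPeriod_pos_of_mem_periodicPts (pick_mem φ H j)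
  have hper : ∀ j, Function.IsPeriodicPt φ (p j) (γ j) :=
    fun j => Function.isPeriodicPt_minimalPeriod φ (γ j)
  have key : ∀ (j a c : ℕ), a ≤ c → (φ^[a] (γ j) = φ^[c] (γ j) ↔ p j ∣ c - a) := by
    intro j a c hac
    constructor
    · intro hee
      have hx : Function.minimalPeriod φ (φ^[a] (γ j)) = p j :=
        Function.minimalPeriod_apply_iterate (pick_mem φ H j) a
      have hip : Function.IsPeriodicPt φ (c - a) (φ^[a] (γ j)) := by
        show φ^[c-a] (φ^[a] (γ j)) = φ^[a] (γ j)
        rw [← Function.iterate_add_apply, show c - a + a = c from by omega, ← hee]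
      have := hip.minimalPeriod_dvd
      rwa [hx] at this
    · intro hd
      obtain ⟨t, ht⟩ := hd
      have hip : Function.IsPeriodicPt φ (c - a) (φ^[a] (γ j)) := by
        rw [ht]
        exact ((hper j).apply_iterate a).mul_const t
      have h2 : φ^[c] (γ j) = φ^[a] (γ j) := by
        calc φ^[c] (γ j) = φ^[c - a + a] (γ j) := by rw [show c - a + a = c from by omega]
          _ = φ^[c-a] (φ^[a] (γ j)) := Function.iterate_add_apply _ _ _ _
          _ = φ^[a] (γ j) := hip
      exact h2.symm
  apply core φ w hw (fun j m => φ^[m] (γ j)) p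
  · intro j m
    exact (Function.iterate_succ_apply' φ m (γ j)).symm
  · intro j j' m m' hee
    have h1 : Function.minimalPeriod φ (φ^[m] (γ j)) = p j :=
      Function.minimalPeriod_apply_iterate (pick_mem φ H j) m
    have h2 : Function.minimalPeriod φ (φ^[m'] (γ j')) = p j' :=
      Function.minimalPeriod_apply_iterate (pick_mem φ H j') m'
    have hpp : p j = p j' := by rw [← h1, ← h2, hee]
    have hjj : j = j' := hmono.injective hpp
    subst hjj
    rfl
  · intro j m n
    constructor
    · rintro ⟨k, hk⟩
      rcases le_total m n with hmn | hnm
      · have hd := (key j (m+k) (n+k) (by omega)).mp hk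
        rw [show n+k-(m+k) = n - m from by omega] at hd
        exact (Nat.modEq_iff_dvd' hmn).mpr hd
      · have hd := (key j (n+k) (m+k) (by omega)).mp hk.symm
        rw [show m+k-(n+k) = m - n from by omega] at hd
        exact ((Nat.modEq_iff_dvd' hnm).mpr hd).symm
    · intro hmod
      rcases le_total m n with hmn | hnm
      · have hd : p j ∣ n - m := (Nat.modEq_iff_dvd' hmn).mp hmod
        exact ⟨0, (key j m n hmn).mpr hd⟩
      · have hd : p j ∣ m - n := (Nat.modEq_iff_dvd' hnm).mp (Nat.ModEq.symm hmod)
        exact ⟨0, ((key j n m hnm).mpr hd).symm⟩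
  · intro B
    refine ⟨B+1, Or.inr ?_⟩
    have h2 : (B+1 : ℕ) ≤ p (B+1) := hmono.le_apply
    omega

lemma mem_periodicPts_of (φ : Γ → Γ) {x : Γ} (hx : x ∈ PerSet φ) : x ∈ periodicPts φ := by
  obtain ⟨n, hn1, hn2⟩ := hx
  exact ⟨n, by omega, hn2⟩

lemma perOf_eq_minimalPeriod (φ : Γ → Γ) {x : Γ} (hx : x ∈ PerSet φ) :
    perOf φ x = Function.minimalPeriod φ x := by
  have hxp : x ∈ periodicPts φ := mem_periodicPts_of φ hx
  apply le_antisymm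
  · apply Nat.sInf_le
    exact ⟨Function.minimalPeriod_pos_of_mem_periodicPts hxp,
      Function.isPeriodicPt_minimalPeriod φ x⟩
  · have hmem := Nat.sInf_mem (hx : {n : ℕ | 1 ≤ n ∧ φ^[n] x = x}.Nonempty)
    have hd : Function.minimalPeriod φ x ∣ perOf φ x :=
      Function.IsPeriodicPt.minimalPeriod_dvd hmem.2
    exact Nat.le_of_dvd hmem.1 hd

end Stmt11Aux

/-- If `𝔴` is nowhere zero, `σ_{φ,𝔴}` is finite fibre, and `φ` has a non-quasi-periodic
point or `Per(φ) ≠ ∅` with `sup{per(α) : α ∈ Per(φ)} = +∞`, then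
`ent_cset(σ_{φ,𝔴}) = ent_cset(σ_φ) = +∞`. -/
theorem stmt_11 {F : Type*} [Field F] [Fintype F] {Γ : Type*} [Nonempty Γ]
    (φ : Γ → Γ) (w : Γ → F) (hw : ∀ α : Γ, w α ≠ 0)
    (hff : FiniteFibre (wshift φ w))
    (h : (∃ α : Γ, ¬ QuasiPeriodicPt φ α) ∨
      ((PerSet φ).Nonempty ∧ ∀ k : ℕ, ∃ α ∈ PerSet φ, k ≤ perOf φ α)) :
    entCset (wshift φ w) = ⊤ ∧ entCset (wshift φ (1 : Γ → F)) = ⊤ := by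
  have main : ∀ (w' : Γ → F), (∀ α, w' α ≠ 0) → entCset (wshift φ w') = ⊤ := by
    intro w' hw'
    apply Stmt11Aux.antiOrbitNumber_eq_top_of
    intro M
    rcases h with ⟨α₀, hα₀⟩ | ⟨hne, hsup⟩
    · exact Stmt11Aux.case1 φ hα₀ w' hw' M
    · have H : ∀ k : ℕ, ∃ α, α ∈ Function.periodicPts φ ∧ k ≤ Function.minimalPeriod φ α := by
        intro k
        obtain ⟨α, hα, hk⟩ := hsup k
        refine ⟨α, Stmt11Aux.mem_periodicPts_of φ hα, ?_⟩
        rwa [← Stmt11Aux.perOf_eq_minimalPeriod φ hα]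
      exact Stmt11Aux.case2 φ H w' hw' M
  exact ⟨main w hw, main 1 (fun α => one_ne_zero)⟩
end

section
/- Suppose 𝔴_α ≠ 0 for every α ∈ Γ, Per(φ) = Fix(φ), every point of Γ is a quasi-periodic point of φ, and σ_{φ,𝔴} : F^Γ → F^Γ is finite fibre. Then the weighted generalized shift σ_{φ|Fix(φ), 𝔴^{Fix(φ)}} : F^{Fix(φ)} → F^{Fix(φ)} is bijective. -/
open Function Set

/-- `Fix φ`: the set of fixed points of `φ`. -/
def FixS {Γ : Type*} (φ : Γ → Γ) : Set Γ := {α | φ α = α}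

/-- The restriction `φ|Fix(φ) : Fix(φ) → Fix(φ)`. -/
def fixRes {Γ : Type*} (φ : Γ → Γ) : FixS φ → FixS φ :=
  fun a => ⟨φ a.1, by
    have h : φ a.1 = a.1 := a.2
    simp only [FixS, Set.mem_setOf_eq]
    simp [h]⟩

/-- If `𝔴` is nowhere zero, `Per(φ) = Fix(φ)`, every point of `Γ` is quasi-periodic for
`φ`, and `σ_{φ,𝔴}` is finite fibre, then `σ_{φ|Fix(φ), 𝔴^{Fix(φ)}}` is bijective. -/
theorem stmt_12 {F : Type*} [Field F] [Fintype F] {Γ : Type*} [Nonempty Γ]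
    (φ : Γ → Γ) (w : Γ → F) (hw : ∀ α : Γ, w α ≠ 0)
    (hper : PerSet φ = FixS φ)
    (hqp : ∀ α : Γ, QuasiPeriodicPt φ α)
    (hff : FiniteFibre (wshift φ w)) :
    Function.Bijective (wshift (fixRes φ) (fun a => w a.1)) := by
  have hfix : ∀ a : FixS φ, fixRes φ a = a := by
    rintro ⟨a, ha⟩
    exact Subtype.ext (ha : φ a = a)
  refine ⟨?_, ?_⟩
  · intro x y hxy
    funext a
    have := congrFun hxy a
    simp only [wshift, hfix] at this
    exact mul_left_cancel₀ (hw a.1) this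
  · intro y
    refine ⟨fun a => (w a.1)⁻¹ * y a, ?_⟩
    funext a
    simp only [wshift, hfix]
    exact mul_inv_cancel_left₀ (hw a.1) (y a)
end

section
/- Suppose 𝔴_α ≠ 0 for every α ∈ Γ, Per(φ) = Fix(φ), every point of Γ is a quasi-periodic point of φ, and σ_{φ,𝔴} : F^Γ → F^Γ is finite fibre. Then the map 𝔭 : sc(σ_{φ,𝔴}) → F^{Fix(φ)} defined by 𝔭(x) = x^{Fix(φ)} is bijective. -/
open Function Set

/-- Surjective cover `sc(f) = ∩_{n≥1} f^n(A)`. -/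
def scSet {A : Type*} (f : A → A) : Set A := {x | ∀ n : ℕ, 1 ≤ n → x ∈ Set.range f^[n]}

/-!
Every point `α` reaches a fixed point `a` of `φ` after some number `N` of steps, and
`(σ^N z)_α = (∏_{i<N} 𝔴_{φ^i α}) z_a`, `(σ^N z)_a = 𝔴_a^N z_a`. Hence a point `x` of `sc(σ)` satisfies
`x_α = c_N(α) x_a` with `c_N(α) = (∏_{i<N} 𝔴_{φ^i α}) 𝔴_a^{-N}`, so it is determined by `x^{Fix(φ)}`.
Conversely, `c_N(α)` does not depend on the choice of `N`, and `α ↦ c_N(α) y_a` lies in the image of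
every `σ^n` for any prescribed `y ∈ F^{Fix(φ)}`.
-/

section Dynamics

variable {A : Type*} {f : A → A}

theorem exists_isFixedPt_iterate (hper : PerSet f = FixS f) {x : A} (hx : QuasiPeriodicPt f x) :
    ∃ n, IsFixedPt f (f^[n] x) := by
  obtain ⟨n, m, -, hnm, heq⟩ := hx
  have hperiodic : f^[n] x ∈ PerSet f :=
    ⟨m - n, by omega, by rw [← iterate_add_apply, Nat.sub_add_cancel hnm.le, ← heq]⟩
  rw [hper] at hperiodic
  exact ⟨n, hperiodic⟩

theorem iterate_eq_of_isFixedPt_iterate {x : A} {m n : ℕ} (hm : IsFixedPt f (f^[m] x))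
    (hn : IsFixedPt f (f^[n] x)) : f^[m] x = f^[n] x := by
  wlog hmn : m ≤ n generalizing m n
  · exact (this hn hm (le_of_not_ge hmn)).symm
  obtain ⟨k, rfl⟩ := exists_add_of_le hmn
  rw [add_comm, iterate_add_apply, (hm.iterate k).eq]

theorem mem_range_iterate_of_mem_scSet {x : A} (hx : x ∈ scSet f) (n : ℕ) : x ∈ range f^[n] := by
  rcases n with _ | n
  · exact ⟨x, rfl⟩
  · exact hx _ n.succ_pos

end Dynamics

section WeightedShift

variable {F : Type*} [Field F] {Γ : Type*} {φ : Γ → Γ} {w : Γ → F}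

def iterWeight (φ : Γ → Γ) (w : Γ → F) (n : ℕ) (α : Γ) : F :=
  ∏ i ∈ Finset.range n, w (φ^[i] α)

theorem wshift_iterate_apply (n : ℕ) (z : Γ → F) (α : Γ) :
    (wshift φ w)^[n] z α = iterWeight φ w n α * z (φ^[n] α) := by
  induction n generalizing z with
  | zero => simp [iterWeight]
  | succ n ih =>
    rw [iterate_succ_apply, ih]
    simp only [iterWeight, Finset.prod_range_succ, iterate_succ_apply', wshift]
    ring

theorem iterWeight_add (m n : ℕ) (α : Γ) :
    iterWeight φ w (m + n) α = iterWeight φ w m α * iterWeight φ w n (φ^[m] α) := by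
  rw [iterWeight, iterWeight, iterWeight, Finset.prod_range_add]
  congr 1
  exact Finset.prod_congr rfl fun i _ => by rw [← iterate_add_apply, add_comm]

theorem iterWeight_of_isFixedPt {a : Γ} (ha : IsFixedPt φ a) (n : ℕ) :
    iterWeight φ w n a = w a ^ n := by
  simp [iterWeight, iterate_fixed ha]

def normWeight (φ : Γ → Γ) (w : Γ → F) (n : ℕ) (α : Γ) : F :=
  iterWeight φ w n α * (w (φ^[n] α))⁻¹ ^ n

theorem normWeight_add (m n : ℕ) (α : Γ) :
    normWeight φ w (m + n) α =
      iterWeight φ w m α * (w (φ^[n] (φ^[m] α)))⁻¹ ^ m * normWeight φ w n (φ^[m] α) := by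
  rw [normWeight, normWeight, iterWeight_add, ← iterate_add_apply, add_comm n m, pow_add]
  ring

theorem normWeight_eq_of_isFixedPt (hw : ∀ α, w α ≠ 0) {α : Γ} {m n : ℕ}
    (hm : IsFixedPt φ (φ^[m] α)) (hn : IsFixedPt φ (φ^[n] α)) :
    normWeight φ w m α = normWeight φ w n α := by
  wlog hmn : m ≤ n generalizing m n
  · exact (this hn hm (le_of_not_ge hmn)).symm
  obtain ⟨k, rfl⟩ := exists_add_of_le hmn
  have hcancel : w (φ^[m] α) ^ k * (w (φ^[m] α))⁻¹ ^ k = 1 := by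
    rw [← mul_pow, mul_inv_cancel₀ (hw _), one_pow]
  rw [normWeight, normWeight, iterate_eq_of_isFixedPt_iterate hn hm, iterWeight_add,
    iterWeight_of_isFixedPt hm, pow_add]
  linear_combination -(iterWeight φ w m α * (w (φ^[m] α))⁻¹ ^ m) * hcancel

theorem apply_eq_normWeight_mul {n : ℕ} {x : Γ → F} (hx : x ∈ range (wshift φ w)^[n]) {α : Γ}
    (hfix : IsFixedPt φ (φ^[n] α)) (hw : w (φ^[n] α) ≠ 0) :
    x α = normWeight φ w n α * x (φ^[n] α) := by
  obtain ⟨z, rfl⟩ := hx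
  rw [wshift_iterate_apply, wshift_iterate_apply, iterWeight_of_isFixedPt hfix, iterate_fixed hfix,
    normWeight, inv_pow, mul_assoc, inv_mul_cancel_left₀ (pow_ne_zero n hw)]

variable (hw : ∀ α, w α ≠ 0) (hfix : ∀ α, ∃ n, IsFixedPt φ (φ^[n] α))
include hw hfix

theorem injective_restrict_scSet_fixS :
    Injective (fun (x : scSet (wshift φ w)) => (fun (a : FixS φ) => x.1 a.1)) := by
  intro x x' hxx'
  ext α
  obtain ⟨n, hn⟩ := hfix α
  rw [apply_eq_normWeight_mul (mem_range_iterate_of_mem_scSet x.2 n) hn (hw _),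
    apply_eq_normWeight_mul (mem_range_iterate_of_mem_scSet x'.2 n) hn (hw _)]
  exact congrArg _ (congrFun hxx' ⟨_, hn⟩)

theorem surjective_restrict_scSet_fixS :
    Surjective (fun (x : scSet (wshift φ w)) => (fun (a : FixS φ) => x.1 a.1)) := by
  intro y
  choose N hN using hfix
  set a : Γ → Γ := fun α => φ^[N α] α
  have ha_iterate (n : ℕ) (α : Γ) : a (φ^[n] α) = a α := by
    have h := hN (φ^[n] α)
    rw [← iterate_add_apply] at h
    exact (iterate_add_apply φ _ n α).symm.trans (iterate_eq_of_isFixedPt_iterate h (hN α))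
  set Y : Γ → F := fun α => y ⟨a α, hN α⟩
  have hY (n : ℕ) (α : Γ) : Y (φ^[n] α) = Y α := congrArg y (Subtype.ext (ha_iterate n α))
  set g : Γ → F := fun α => normWeight φ w (N α) α * Y α
  have hg (n : ℕ) : g ∈ range (wshift φ w)^[n] := by
    refine ⟨fun β => (w (a β))⁻¹ ^ n * g β, funext fun α => ?_⟩
    have hfix' : IsFixedPt φ (φ^[n + N (φ^[n] α)] α) := by
      rw [add_comm, iterate_add_apply]
      exact hN _
    simp only [wshift_iterate_apply, g, hY, ha_iterate]
    have ha' : φ^[N (φ^[n] α)] (φ^[n] α) = a α := ha_iterate n α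
    rw [← normWeight_eq_of_isFixedPt hw hfix' (hN α), normWeight_add, ha']
    ring
  refine ⟨⟨g, fun n _ => hg n⟩, funext fun b => ?_⟩
  have hNb : normWeight φ w (N b) b = 1 := by
    rw [normWeight_eq_of_isFixedPt hw (hN b) (n := 0) b.2]
    simp [normWeight, iterWeight]
  simp only [g, hNb, one_mul, Y]
  exact congrArg y (Subtype.ext (iterate_fixed b.2 _))

end WeightedShift

theorem stmt_13_general {F : Type*} [Field F] {Γ : Type*}
    (φ : Γ → Γ) (w : Γ → F) (hw : ∀ α : Γ, w α ≠ 0)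
    (hper : PerSet φ = FixS φ)
    (hqp : ∀ α : Γ, QuasiPeriodicPt φ α) :
    Function.Bijective
      (fun (x : scSet (wshift φ w)) => (fun (a : FixS φ) => x.1 a.1)) := by
  have hfix (α : Γ) : ∃ n, IsFixedPt φ (φ^[n] α) := exists_isFixedPt_iterate hper (hqp α)
  exact ⟨injective_restrict_scSet_fixS hw hfix, surjective_restrict_scSet_fixS hw hfix⟩

/-- If `𝔴` is nowhere zero, `Per(φ) = Fix(φ)`, every point of `Γ` is quasi-periodic for
`φ`, and `σ_{φ,𝔴}` is finite fibre, then `𝔭 : sc(σ_{φ,𝔴}) → F^{Fix(φ)}`,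
`𝔭(x) = x^{Fix(φ)}`, is bijective. -/
theorem stmt_13 {F : Type*} [Field F] [Fintype F] {Γ : Type*} [Nonempty Γ]
    (φ : Γ → Γ) (w : Γ → F) (hw : ∀ α : Γ, w α ≠ 0)
    (hper : PerSet φ = FixS φ)
    (hqp : ∀ α : Γ, QuasiPeriodicPt φ α)
    (hff : FiniteFibre (wshift φ w)) :
    Function.Bijective
      (fun (x : scSet (wshift φ w)) => (fun (a : FixS φ) => x.1 a.1)) :=
  stmt_13_general φ w hw hper hqp
end

section
/- If 𝔴_α ≠ 0 for every α ∈ Γ and σ_{φ,𝔴} : F^Γ → F^Γ is finite fibre, then ent_cset(σ_{φ,𝔴}) = ent_cset(σ_φ), and this common value belongs to {0, +∞}. -/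
open Function Set

section
variable {F : Type*} [Field F] {Γ : Type*} (φ : Γ → Γ) (w : Γ → F)

/-- product of weights along the orbit -/
def Wp (t : ℕ) (γ : Γ) : F := ∏ j ∈ Finset.range t, w (φ^[j] γ)

lemma Wp_zero (γ : Γ) : Wp φ w 0 γ = 1 := by simp [Wp]

lemma Wp_succ (t : ℕ) (γ : Γ) : Wp φ w (t + 1) γ = Wp φ w t γ * w (φ^[t] γ) := by
  simp [Wp, Finset.prod_range_succ]

lemma Wp_succ' (t : ℕ) (γ : Γ) : Wp φ w (t + 1) γ = w γ * Wp φ w t (φ γ) := by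
  rw [Wp, Finset.prod_range_succ']
  simp [Wp, Function.iterate_succ_apply, mul_comm]

lemma Wp_ne_zero (hw : ∀ α, w α ≠ 0) (t : ℕ) (γ : Γ) : Wp φ w t γ ≠ 0 :=
  Finset.prod_ne_zero_iff.mpr fun _ _ => hw _

variable {a : ℕ → Γ → F}

lemma anti_apply (ha : IsAntiOrbit (wshift φ w) a) (n : ℕ) (γ : Γ) :
    a n γ = w γ * a (n + 1) (φ γ) := by
  conv_lhs => rw [← ha n]
  rfl

lemma anti_iter_s15 (ha : IsAntiOrbit (wshift φ w) a) (n t : ℕ) (γ : Γ) :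
    a n γ = Wp φ w t γ * a (n + t) (φ^[t] γ) := by
  induction t generalizing n γ with
  | zero => simp [Wp_zero]
  | succ t ih =>
    have h1 : φ^[t] (φ γ) = φ^[t + 1] γ := (Function.iterate_succ_apply φ t γ).symm
    rw [anti_apply φ w ha n γ, ih (n + 1) (φ γ), Wp_succ', h1,
      show n + 1 + t = n + (t + 1) by omega, mul_assoc]
end
section
variable {F : Type*} [Field F] {Γ : Type*} (φ : Γ → Γ) (w : Γ → F) {a : ℕ → Γ → F}

lemma anti_periodic_pt [Fintype F] (hw : ∀ α, w α ≠ 0)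
    (ha : IsAntiOrbit (wshift φ w) a) {p : Γ} {k : ℕ}
    (hp : φ^[k] p = p) (n : ℕ) :
    a n p = a (n + k * (Fintype.card F - 1)) p := by
  have step : ∀ m, a m p = Wp φ w k p * a (m + k) p := by
    intro m
    conv_lhs => rw [anti_iter_s15 φ w ha m k p, hp]
  have pow : ∀ j m, a m p = (Wp φ w k p) ^ j * a (m + k * j) p := by
    intro j
    induction j with
    | zero => intro m; simp
    | succ j ih =>
      intro m
      rw [step m, ih (m + k), pow_succ]
      rw [show m + k + k * j = m + k * (j + 1) by ring]
      ring
  rw [pow (Fintype.card F - 1) n,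
    FiniteField.pow_card_sub_one_eq_one _ (Wp_ne_zero φ w hw k p), one_mul]

lemma not_injective_of_ev [Fintype F] (hw : ∀ α, w α ≠ 0) {k : ℕ} (hk : 1 ≤ k)
    (hev : ∀ α, ∃ t, φ^[t + k] α = φ^[t] α)
    (ha : IsAntiOrbit (wshift φ w) a) : ¬ Function.Injective a := by
  set K := k * (Fintype.card F - 1) with hK
  have hKpos : 0 < K := by
    have : 1 < Fintype.card F := Fintype.one_lt_card
    have : 0 < Fintype.card F - 1 := by omega
    positivity
  have key : ∀ n, a n = a (n + K) := by
    intro n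
    funext γ
    obtain ⟨t, ht⟩ := hev γ
    have hp : φ^[k] (φ^[t] γ) = φ^[t] γ := by
      rw [← Function.iterate_add_apply, Nat.add_comm k t, ht]
    calc a n γ = Wp φ w t γ * a (n + t) (φ^[t] γ) := anti_iter_s15 φ w ha n t γ
    _ = Wp φ w t γ * a (n + t + K) (φ^[t] γ) := by
        rw [← anti_periodic_pt φ w hw ha hp (n + t)]
    _ = a (n + K) γ := by
        rw [show n + t + K = n + K + t by ring, ← anti_iter_s15 φ w ha (n + K) t γ]
  intro hinj
  have := hinj (key 0)
  omega
end
section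
variable {Γ : Type*} (φ : Γ → Γ)

lemma iterate_fixed_mul {γ : Γ} {L : ℕ} (h : φ^[L] γ = γ) (c : ℕ) : φ^[L * c] γ = γ := by
  rw [Function.iterate_mul]
  exact Function.iterate_fixed h c

lemma iterate_mod {γ : Γ} {L : ℕ} (h : φ^[L] γ = γ) (t : ℕ) :
    φ^[t] γ = φ^[t % L] γ := by
  conv_lhs => rw [← Nat.mod_add_div t L]
  rw [Function.iterate_add_apply, iterate_fixed_mul φ h]

lemma dichotomy
    (hP : ∀ k, 1 ≤ k → ∃ α, ∀ t, φ^[t + k] α ≠ φ^[t] α) :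
    (∃ β : Γ, Function.Injective fun s => φ^[s] β) ∨
    (∀ N, ∃ (γ : Γ) (L : ℕ), N < L ∧ φ^[L] γ = γ ∧ ∀ j, 0 < j → j < L → φ^[j] γ ≠ γ) := by
  by_cases hi : ∃ β : Γ, Function.Injective fun s => φ^[s] β
  · exact Or.inl hi
  right
  push_neg at hi
  intro N
  obtain ⟨α, hα⟩ := hP N.factorial (Nat.one_le_iff_ne_zero.mpr (Nat.factorial_ne_zero N))
  -- α is eventually periodic
  obtain ⟨s, t, hst, hne⟩ := Function.not_injective_iff.mp (hi α)
  -- wlog s < t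
  have hper : ∃ (γ0 : Γ) (L0 : ℕ), 0 < L0 ∧ φ^[L0] γ0 = γ0 ∧ ∃ u, γ0 = φ^[u] α := by
    rcases Nat.lt_or_ge s t with h | h
    · exact ⟨φ^[s] α, t - s, by omega, by
        rw [← Function.iterate_add_apply, show t - s + s = t by omega, hst], s, rfl⟩
    · have h' : t < s := by omega
      exact ⟨φ^[t] α, s - t, by omega, by
        rw [← Function.iterate_add_apply, show s - t + t = s by omega, hst], t, rfl⟩
  obtain ⟨γ0, L0, hL0, hfix, u, hu⟩ := hper
  have hex : ∃ L, 0 < L ∧ φ^[L] γ0 = γ0 := ⟨L0, hL0, hfix⟩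
  classical
  set L := Nat.find hex with hLdef
  obtain ⟨hLpos, hLfix⟩ := Nat.find_spec hex
  refine ⟨γ0, L, ?_, hLfix, ?_⟩
  · -- N < L
    by_contra hle
    push_neg at hle
    obtain ⟨c, hc⟩ := Nat.dvd_factorial hLpos hle
    have : φ^[N.factorial] γ0 = γ0 := by rw [hc]; exact iterate_fixed_mul φ hLfix c
    have : φ^[u + N.factorial] α = φ^[u] α := by
      rw [Nat.add_comm u N.factorial, Function.iterate_add_apply, ← hu, this, hu]
    exact hα u this
  · intro j hj0 hjL
    intro hfj
    exact Nat.find_min hex hjL ⟨hj0, hfj⟩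
end
section
attribute [local instance] Classical.propDecidable
variable {F : Type*} [Field F] {Γ : Type*} (φ : Γ → Γ) (w : Γ → F)

/-- Extension of a partial anti-orbit on a forward-closed set `S` to a global anti-orbit,
by pulling back along hitting times. -/
noncomputable def extAO (S : Set Γ) (g : ℕ → Γ → F) (n : ℕ) (γ : Γ) : F :=
  if h : ∃ t, φ^[t] γ ∈ S then
    Wp φ w (Nat.find h) γ * g (n + Nat.find h) (φ^[Nat.find h] γ)
  else 0

lemma extAO_mem {S : Set Γ} (g : ℕ → Γ → F) {γ : Γ} (hγ : γ ∈ S) (n : ℕ) :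
    extAO φ w S g n γ = g n γ := by
  have h : ∃ t, φ^[t] γ ∈ S := ⟨0, hγ⟩
  have h0 : Nat.find h = 0 := Nat.find_eq_zero h |>.mpr hγ
  rw [extAO, dif_pos h, h0]
  simp [Wp_zero]

lemma extAO_not {S : Set Γ} (g : ℕ → Γ → F) {γ : Γ} (hγ : ¬ ∃ t, φ^[t] γ ∈ S) (n : ℕ) :
    extAO φ w S g n γ = 0 := dif_neg hγ

lemma extAO_anti {S : Set Γ} (hS : ∀ γ ∈ S, φ γ ∈ S) {g : ℕ → Γ → F}
    (hg : ∀ n γ, γ ∈ S → g n γ = w γ * g (n + 1) (φ γ)) :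
    IsAntiOrbit (wshift φ w) (extAO φ w S g) := by
  intro n
  funext γ
  show w γ * extAO φ w S g (n + 1) (φ γ) = extAO φ w S g n γ
  by_cases h : ∃ t, φ^[t] γ ∈ S
  · rcases Nat.eq_zero_or_pos (Nat.find h) with h0 | hpos
    · have hγS : γ ∈ S := by
        have := Nat.find_spec h
        rwa [h0] at this
      rw [extAO_mem φ w g hγS, extAO_mem φ w g (hS γ hγS), ← hg n γ hγS]
    · -- γ ∉ S, find = T' + 1
      obtain ⟨T', hT'⟩ : ∃ T', Nat.find h = T' + 1 := ⟨Nat.find h - 1, by omega⟩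
      have hspec := Nat.find_spec h
      have h' : ∃ t, φ^[t] (φ γ) ∈ S := ⟨T', by
        rw [← Function.iterate_succ_apply]; rw [hT'] at hspec; exact hspec⟩
      have hfind' : Nat.find h' = T' := by
        apply le_antisymm
        · apply Nat.find_le
          rw [← Function.iterate_succ_apply]
          rw [hT'] at hspec; exact hspec
        · by_contra hlt
          push_neg at hlt
          have := Nat.find_spec h'
          rw [← Function.iterate_succ_apply] at this
          have : Nat.find h ≤ Nat.find h' + 1 := Nat.find_le this
          omega
      rw [extAO, extAO, dif_pos h, dif_pos h', hfind', hT']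
      rw [Function.iterate_succ_apply, Wp_succ',
        show n + 1 + T' = n + (T' + 1) by omega, mul_assoc]
  · have h' : ¬ ∃ t, φ^[t] (φ γ) ∈ S := by
      rintro ⟨t, ht⟩
      exact h ⟨t + 1, by rwa [Function.iterate_succ_apply]⟩
    rw [extAO_not φ w g h, extAO_not φ w g h', mul_zero]
end
section
attribute [local instance] Classical.propDecidable
variable {F : Type*} [Field F] {Γ : Type*} (φ : Γ → Γ) (w : Γ → F)

/-- indicator of the set of squares of numbers `≡ i (mod m)`, shifted encoding -/
noncomputable def chiI (m i : ℕ) (z : ℤ) : F :=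
  if ∃ r : ℕ, z = (((r + 1) * m + i : ℕ) : ℤ) ^ 2 then 1 else 0

lemma keyA {m i i' : ℕ} (hm : 0 < m) (hi : i < m) (hi' : i' < m) (d : ℤ)
    (hne : i ≠ i' ∨ d ≠ 0) :
    ∃ z : ℕ, (∃ r : ℕ, (z : ℤ) = (((r + 1) * m + i : ℕ) : ℤ) ^ 2) ∧
      ¬ (∃ r : ℕ, (z : ℤ) + d = (((r + 1) * m + i' : ℕ) : ℤ) ^ 2) := by
  set r0 := d.natAbs with hr0
  set X : ℕ := (r0 + 1) * m + i with hX
  have hle : r0 + 1 ≤ (r0 + 1) * m := Nat.le_mul_of_pos_right _ hm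
  have hXbign : d.natAbs < X := by omega
  have hXbig : (d.natAbs : ℤ) < (X : ℤ) := by exact_mod_cast hXbign
  refine ⟨X ^ 2, ⟨r0, by rw [← hX]; push_cast; ring⟩, ?_⟩
  rintro ⟨r, hr⟩
  set Y : ℕ := (r + 1) * m + i' with hY
  have hle' : r + 1 ≤ (r + 1) * m := Nat.le_mul_of_pos_right _ hm
  have hx1 : (1 : ℤ) ≤ (X : ℤ) := by exact_mod_cast show 1 ≤ X by omega
  have hy1 : (1 : ℤ) ≤ (Y : ℤ) := by exact_mod_cast show 1 ≤ Y by omega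
  have hd : (Y : ℤ) ^ 2 - (X : ℤ) ^ 2 = d := by push_cast at hr ⊢; linarith
  have habs : |d| ≤ (d.natAbs : ℤ) := by rw [Int.abs_eq_natAbs]
  have hXY : (Y : ℤ) = (X : ℤ) := by
    rcases lt_trichotomy (Y : ℤ) (X : ℤ) with h | h | h
    · exfalso
      have h1 : (Y : ℤ) + 1 ≤ X := by omega
      have h2 : (X : ℤ) ^ 2 - (Y : ℤ) ^ 2 ≥ (X : ℤ) + (Y : ℤ) := by nlinarith
      have h3 : -d ≥ (X : ℤ) := by omega
      have h4 : |d| ≥ (X : ℤ) := by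
        rcases abs_cases d with ⟨h5, _⟩ | ⟨h5, _⟩ <;> omega
      omega
    · exact h
    · exfalso
      have h1 : (X : ℤ) + 1 ≤ Y := by omega
      have h2 : (Y : ℤ) ^ 2 - (X : ℤ) ^ 2 ≥ (X : ℤ) + (Y : ℤ) := by nlinarith
      have h3 : d ≥ (X : ℤ) := by omega
      have h4 : |d| ≥ (X : ℤ) := by
        rcases abs_cases d with ⟨h5, _⟩ | ⟨h5, _⟩ <;> omega
      omega
  have hd0 : d = 0 := by rw [← hd, hXY]; ring
  have hXYnat : X = Y := by exact_mod_cast hXY.symm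
  have hii : i = i' := by
    have h1 : X % m = i := by
      rw [hX, Nat.add_comm, Nat.add_mul_mod_self_right]
      exact Nat.mod_eq_of_lt hi
    have h2 : Y % m = i' := by
      rw [hY, Nat.add_comm, Nat.add_mul_mod_self_right]
      exact Nat.mod_eq_of_lt hi'
    rw [← h1, ← h2, hXYnat]
  rcases hne with h | h
  · exact h hii
  · exact h hd0

lemma chiI_ne {m i i' : ℕ} (hm : 0 < m) (hi : i < m) (hi' : i' < m) (d : ℤ)
    (hne : i ≠ i' ∨ d ≠ 0) :
    ∃ z : ℕ, chiI (F := F) m i (z : ℤ) ≠ chiI (F := F) m i' ((z : ℤ) + d) := by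
  obtain ⟨z, h1, h2⟩ := keyA hm hi hi' d hne
  refine ⟨z, ?_⟩
  rw [chiI, chiI, if_pos h1, if_neg h2]
  exact one_ne_zero
end
section
attribute [local instance] Classical.propDecidable
variable {F : Type*} [Field F] {Γ : Type*} (φ : Γ → Γ) (w : Γ → F)

noncomputable def gI (β : Γ) (m i : ℕ) (n : ℕ) (γ : Γ) : F :=
  if h : ∃ s : ℕ, φ^[s] β = γ then
    (Wp φ w h.choose β)⁻¹ * chiI m i ((h.choose : ℤ) - n)
  else 0

lemma gI_at {β : Γ} (hβ : Function.Injective fun s => φ^[s] β) (m i n s : ℕ) :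
    gI φ w β m i n (φ^[s] β) = (Wp φ w s β)⁻¹ * chiI m i ((s : ℤ) - n) := by
  have h : ∃ s' : ℕ, φ^[s'] β = φ^[s] β := ⟨s, rfl⟩
  have hc : h.choose = s := hβ h.choose_spec
  rw [gI, dif_pos h, hc]

lemma hasDisjoint_caseI (hw : ∀ α, w α ≠ 0) {β : Γ}
    (hβ : Function.Injective fun s => φ^[s] β) (m : ℕ) :
    HasDisjointAntiOrbits (wshift φ w) m := by
  rcases Nat.eq_zero_or_pos m with rfl | hm
  · exact ⟨Fin.elim0, fun i => i.elim0, fun i => i.elim0⟩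
  set S : Set Γ := Set.range fun s : ℕ => φ^[s] β with hSdef
  have hS : ∀ γ ∈ S, φ γ ∈ S := by
    rintro γ ⟨s, rfl⟩
    exact ⟨s + 1, by simp [Function.iterate_succ_apply']⟩
  have hg : ∀ i : Fin m, ∀ n γ, γ ∈ S →
      gI φ w β m i n γ = w γ * gI φ w β m i (n + 1) (φ γ) := by
    rintro i n γ ⟨s, rfl⟩
    show gI φ w β m i n (φ^[s] β) = w (φ^[s] β) * gI φ w β m i (n + 1) (φ (φ^[s] β))
    rw [show φ (φ^[s] β) = φ^[s + 1] β from (Function.iterate_succ_apply' φ s β).symm]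
    rw [gI_at φ w hβ, gI_at φ w hβ]
    rw [show (((s + 1 : ℕ) : ℤ) - ((n + 1 : ℕ) : ℤ)) = (s : ℤ) - n by push_cast; ring]
    rw [Wp_succ]
    rw [mul_inv, ← mul_assoc, ← mul_assoc]
    congr 1
    rw [mul_comm (w (φ^[s] β)), mul_assoc, mul_inv_cancel₀ (hw _), mul_one]
  set a : Fin m → ℕ → Γ → F := fun i => extAO φ w S (gI φ w β m i) with ha
  have key : ∀ (i i' : Fin m) (n n' : ℕ), a i n = a i' n' → i = i' ∧ n = n' := by
    intro i i' n n' heq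
    have main : ∀ (j j' : ℕ), j < m → j' < m → (j ≠ j' ∨ n ≠ n') →
        (gI φ w β m j n : Γ → F) ≠ gI φ w β m j' n' → True := fun _ _ _ _ _ _ => trivial
    -- find evaluation point
    have hcontra : ∀ (hne : (i : ℕ) ≠ (i' : ℕ) ∨ n ≠ n'), False := by
      intro hne
      have hdne : (i : ℕ) ≠ (i' : ℕ) ∨ ((n : ℤ) - (n' : ℤ)) ≠ 0 := by
        rcases hne with h | h
        · exact Or.inl h
        · right; intro h2; apply h; omega
      obtain ⟨z, hz⟩ := chiI_ne (F := F) hm i.isLt i'.isLt ((n : ℤ) - n') hdne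
      set s : ℕ := z + n with hs
      have hmem : φ^[s] β ∈ S := ⟨s, rfl⟩
      have h1 : a i n (φ^[s] β) = (Wp φ w s β)⁻¹ * chiI m i ((s : ℤ) - n) := by
        rw [ha]
        simp only
        rw [extAO_mem φ w _ hmem, gI_at φ w hβ]
      have h2 : a i' n' (φ^[s] β) = (Wp φ w s β)⁻¹ * chiI m i' ((s : ℤ) - n') := by
        rw [ha]
        simp only
        rw [extAO_mem φ w _ hmem, gI_at φ w hβ]
      rw [heq, h2] at h1
      have hU : (Wp φ w s β)⁻¹ ≠ 0 := inv_ne_zero (Wp_ne_zero φ w hw s β)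
      have : chiI (F := F) m i' ((s : ℤ) - n') = chiI (F := F) m i ((s : ℤ) - n) :=
        mul_left_cancel₀ hU h1
      apply hz
      rw [show ((s : ℤ) - n) = (z : ℤ) by rw [hs]; push_cast; ring,
        show ((s : ℤ) - n') = (z : ℤ) + ((n : ℤ) - n') by rw [hs]; push_cast; ring] at this
      exact this.symm
    constructor
    · by_contra hne
      exact hcontra (Or.inl (fun h => hne (Fin.ext h)))
    · by_contra hne
      exact hcontra (Or.inr hne)
  refine ⟨a, fun i => ⟨extAO_anti φ w hS (hg i), ?_⟩, ?_⟩
  · intro n n' h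
    exact (key i i n n' h).2
  · intro i j hij
    rw [Set.disjoint_left]
    rintro x ⟨n, rfl⟩ ⟨n', hx⟩
    exact hij ((key j i n' n hx).1).symm
end
section
variable {Γ : Type*} (φ : Γ → Γ)

lemma cycle_pt_inj {γ : Γ} {L : ℕ} (hfix : φ^[L] γ = γ)
    (hex : ∀ j, 0 < j → j < L → φ^[j] γ ≠ γ) {j j' : ℕ} (hj : j < L) (hj' : j' < L)
    (h : φ^[j] γ = φ^[j'] γ) : j = j' := by
  rcases lt_trichotomy j j' with h1 | h1 | h1
  · exfalso
    have e1 : φ^[L - j' + j] γ = γ := by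
      rw [Function.iterate_add_apply, h, ← Function.iterate_add_apply,
        show L - j' + j' = L by omega, hfix]
    exact hex _ (by omega) (by omega) e1
  · exact h1
  · exfalso
    have e1 : φ^[L - j + j'] γ = γ := by
      rw [Function.iterate_add_apply, ← h, ← Function.iterate_add_apply,
        show L - j + j = L by omega, hfix]
    exact hex _ (by omega) (by omega) e1

lemma cycle_le {γ γ' : Γ} {L L' : ℕ} (hfix : φ^[L] γ = γ) (hfix' : φ^[L'] γ' = γ')
    (hex : ∀ j, 0 < j → j < L → φ^[j] γ ≠ γ) (hL : 0 < L) (hL' : 0 < L') {j j' : ℕ}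
    (h : φ^[j] γ = φ^[j'] γ') : L ≤ L' := by
  have hpfix : φ^[L'] (φ^[j] γ) = φ^[j] γ := by
    rw [h, ← Function.iterate_add_apply, Nat.add_comm L' j',
      Function.iterate_add_apply, hfix']
  have hj0L : j % L < L := Nat.mod_lt _ hL
  have hpj0 : φ^[j] γ = φ^[j % L] γ := iterate_mod φ hfix j
  have hγp : φ^[L - j % L] (φ^[j] γ) = γ := by
    rw [hpj0, ← Function.iterate_add_apply, show L - j % L + j % L = L by omega, hfix]
  have hper : φ^[L'] γ = γ := by
    rw [← hγp, ← Function.iterate_add_apply, Nat.add_comm,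
      Function.iterate_add_apply, hpfix]
  by_contra hlt
  exact hex L' hL' (by omega) hper
end
section
attribute [local instance] Classical.propDecidable
variable {F : Type*} [Field F] {Γ : Type*} (φ : Γ → Γ) (w : Γ → F)

noncomputable def gII (c : ℕ → Γ) (L : ℕ → ℕ) (m i : ℕ) (n : ℕ) (γ : Γ) : F :=
  if h : ∃ r, r % m = i ∧ φ^[n % L r] (c r) = γ then (Wp φ w n (c h.choose))⁻¹ else 0

lemma gII_at {c : ℕ → Γ} {L : ℕ → ℕ}
    (huniq : ∀ r r' j j', φ^[j] (c r) = φ^[j'] (c r') → r = r')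
    {m i : ℕ} (n : ℕ) {r : ℕ} (hr : r % m = i) :
    gII φ w c L m i n (φ^[n % L r] (c r)) = (Wp φ w n (c r))⁻¹ := by
  have h : ∃ r', r' % m = i ∧ φ^[n % L r'] (c r') = φ^[n % L r] (c r) := ⟨r, hr, rfl⟩
  have hc : h.choose = r := huniq _ _ _ _ h.choose_spec.2
  rw [gII, dif_pos h, hc]

lemma gII_zero {c : ℕ → Γ} {L : ℕ → ℕ} {m i : ℕ} (n : ℕ) {γ : Γ}
    (hγ : ∀ r, r % m = i → φ^[n % L r] (c r) ≠ γ) :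
    gII φ w c L m i n γ = 0 := by
  rw [gII, dif_neg]
  rintro ⟨r, hr, heq⟩
  exact hγ r hr heq

lemma hasDisjoint_caseII (hw : ∀ α, w α ≠ 0)
    (hcyc : ∀ N, ∃ (γ : Γ) (L : ℕ), N < L ∧ φ^[L] γ = γ ∧
      ∀ j, 0 < j → j < L → φ^[j] γ ≠ γ) (m : ℕ) :
    HasDisjointAntiOrbits (wshift φ w) m := by
  rcases Nat.eq_zero_or_pos m with rfl | hm
  · exact ⟨Fin.elim0, fun i => i.elim0, fun i => i.elim0⟩
  choose Γf Lf hLf hfixf hexf using hcyc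
  set Ns : ℕ → ℕ := fun n => Nat.rec 0 (fun _ prev => Lf prev) n with hNs
  set c : ℕ → Γ := fun r => Γf (Ns r) with hc
  set L : ℕ → ℕ := fun r => Lf (Ns r) with hL
  have hNsucc : ∀ r, Ns (r + 1) = L r := fun r => rfl
  have hmono : StrictMono L := by
    apply strictMono_nat_of_lt_succ
    intro r
    calc L r = Ns (r + 1) := (hNsucc r).symm
    _ < Lf (Ns (r + 1)) := hLf _
    _ = L (r + 1) := rfl
  have hLpos : ∀ r, 0 < L r := fun r => Nat.lt_of_le_of_lt (Nat.zero_le _) (hLf _)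
  have hfix : ∀ r, φ^[L r] (c r) = c r := fun r => hfixf _
  have hex : ∀ r, ∀ j, 0 < j → j < L r → φ^[j] (c r) ≠ c r := fun r => hexf _
  have huniq : ∀ r r' j j', φ^[j] (c r) = φ^[j'] (c r') → r = r' := by
    intro r r' j j' h
    have h1 : L r ≤ L r' := cycle_le φ (hfix r) (hfix r') (hex r) (hLpos r) (hLpos r') h
    have h2 : L r' ≤ L r := cycle_le φ (hfix r') (hfix r) (hex r') (hLpos r') (hLpos r) h.symm
    exact hmono.injective (le_antisymm h1 h2)
  set S : Fin m → Set Γ := fun i => {γ | ∃ r j, r % m = (i : ℕ) ∧ φ^[j] (c r) = γ} with hSdef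
  have hS : ∀ i : Fin m, ∀ γ ∈ S i, φ γ ∈ S i := by
    rintro i γ ⟨r, j, hr, rfl⟩
    exact ⟨r, j + 1, hr, Function.iterate_succ_apply' φ j (c r)⟩
  -- the relation on S i
  have hg : ∀ i : Fin m, ∀ n γ, γ ∈ S i →
      gII φ w c L m i n γ = w γ * gII φ w c L m i (n + 1) (φ γ) := by
    rintro i n γ ⟨r, j, hr, rfl⟩
    have hjmod : φ^[j] (c r) = φ^[j % L r] (c r) := iterate_mod φ (hfix r) j
    set j0 := j % L r with hj0def
    have hj0 : j0 < L r := Nat.mod_lt _ (hLpos r)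
    rw [hjmod]
    have hphi : φ (φ^[j0] (c r)) = φ^[(j0 + 1) % L r] (c r) := by
      rw [← Function.iterate_succ_apply' φ j0 (c r), iterate_mod φ (hfix r) (j0 + 1)]
    by_cases hjn : j0 = n % L r
    · -- nonzero position
      have h1 : gII φ w c L m i n (φ^[j0] (c r)) = (Wp φ w n (c r))⁻¹ := by
        rw [hjn]; exact gII_at φ w huniq n hr
      have hmod1 : (j0 + 1) % L r = (n + 1) % L r := by
        have hme : n % L r = j0 % L r := by
          rw [Nat.mod_eq_of_lt hj0]; exact hjn.symm
        exact (Nat.ModEq.add_right 1 hme).symm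
      have h2 : gII φ w c L m i (n + 1) (φ (φ^[j0] (c r))) = (Wp φ w (n + 1) (c r))⁻¹ := by
        rw [hphi, hmod1]; exact gII_at φ w huniq (n + 1) hr
      rw [h1, h2, Wp_succ]
      have hφn : φ^[n] (c r) = φ^[j0] (c r) := by
        rw [iterate_mod φ (hfix r) n, hjn]
      rw [hφn, mul_inv]
      rw [mul_comm ((Wp φ w n (c r))⁻¹), ← mul_assoc,
        mul_inv_cancel₀ (hw _), one_mul]
    · -- zero position
      have h1 : gII φ w c L m i n (φ^[j0] (c r)) = 0 := by
        apply gII_zero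
        intro r'' hr'' heq
        have hrr : r'' = r := huniq _ _ _ _ heq
        rw [hrr] at heq
        exact hjn (cycle_pt_inj φ (hfix r) (hex r)
          (Nat.mod_lt _ (hLpos r)) hj0 heq).symm
      have h2 : gII φ w c L m i (n + 1) (φ (φ^[j0] (c r))) = 0 := by
        rw [hphi]
        apply gII_zero
        intro r'' hr'' heq
        have hrr : r'' = r := huniq _ _ _ _ heq
        rw [hrr] at heq
        have hmeq : (n + 1) % L r = (j0 + 1) % L r :=
          cycle_pt_inj φ (hfix r) (hex r) (Nat.mod_lt _ (hLpos r))
            (Nat.mod_lt _ (hLpos r)) heq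
        have hme : n % L r = j0 % L r := Nat.ModEq.add_right_cancel' 1 hmeq
        apply hjn
        rw [Nat.mod_eq_of_lt hj0] at hme
        exact hme.symm
      rw [h1, h2, mul_zero]
  set a : Fin m → ℕ → Γ → F := fun i => extAO φ w (S i) (gII φ w c L m i) with ha
  have key : ∀ (i i' : Fin m) (n n' : ℕ), a i n = a i' n' → i = i' ∧ n = n' := by
    intro i i' n n' heq
    have hii : i = i' := by
      by_contra hne
      set r : ℕ := (i : ℕ) with hrdef
      have hr : r % m = (i : ℕ) := Nat.mod_eq_of_lt i.isLt
      set p : Γ := φ^[n % L r] (c r) with hp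
      have hpS : p ∈ S i := ⟨r, n % L r, hr, rfl⟩
      have h1 : a i n p = (Wp φ w n (c r))⁻¹ := by
        rw [ha]; simp only
        rw [extAO_mem φ w _ hpS]
        exact gII_at φ w huniq n hr
      have h2 : a i' n' p = 0 := by
        rw [ha]; simp only
        apply extAO_not
        rintro ⟨t, r'', j'', hr'', heqq⟩
        rw [hp, ← Function.iterate_add_apply] at heqq
        have : r'' = r := huniq _ _ _ _ heqq
        apply hne
        apply Fin.ext
        rw [← hr'', this, hr]
      rw [heq, h2] at h1
      exact inv_ne_zero (Wp_ne_zero φ w hw n (c r)) h1.symm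
    subst hii
    refine ⟨rfl, ?_⟩
    by_contra hnn
    set r : ℕ := (i : ℕ) + m * (n + n' + 1) with hrdef
    have hr : r % m = (i : ℕ) := by
      rw [hrdef, Nat.add_mul_mod_self_left]
      exact Nat.mod_eq_of_lt i.isLt
    have hLr : n < L r ∧ n' < L r := by
      have h1 : r ≤ L r := hmono.le_apply
      have h2 : n + n' + 1 ≤ m * (n + n' + 1) := Nat.le_mul_of_pos_left _ hm
      omega
    set p : Γ := φ^[n % L r] (c r) with hp
    have hpS : p ∈ S i := ⟨r, n % L r, hr, rfl⟩
    have h1 : a i n p = (Wp φ w n (c r))⁻¹ := by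
      rw [ha]; simp only
      rw [extAO_mem φ w _ hpS]
      exact gII_at φ w huniq n hr
    have h2 : a i n' p = 0 := by
      rw [ha]; simp only
      rw [extAO_mem φ w _ hpS]
      apply gII_zero
      intro r'' hr'' heqq
      rw [hp] at heqq
      have hrr : r'' = r := huniq _ _ _ _ heqq
      rw [hrr] at heqq
      have he : n' % L r = n % L r :=
        cycle_pt_inj φ (hfix r) (hex r) (Nat.mod_lt _ (hLpos r))
          (Nat.mod_lt _ (hLpos r)) heqq
      rw [Nat.mod_eq_of_lt hLr.1, Nat.mod_eq_of_lt hLr.2] at he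
      exact hnn he.symm
    rw [heq, h2] at h1
    exact inv_ne_zero (Wp_ne_zero φ w hw n (c r)) h1.symm
  refine ⟨a, fun i => ⟨extAO_anti φ w (hS i) (hg i), ?_⟩, ?_⟩
  · intro n n' h
    exact (key i i n n' h).2
  · intro i j hij
    rw [Set.disjoint_left]
    rintro x ⟨n, rfl⟩ ⟨n', hx⟩
    exact hij ((key j i n' n hx).1).symm
end
section
variable {A : Type*} {f : A → A}

lemma entCset_eq_zero (h : ∀ a : ℕ → A, IsAntiOrbit f a → ¬ Function.Injective a) :
    entCset f = 0 := by
  have hempty : {m : ℕ∞ | ∃ k : ℕ, m = (k : ℕ∞) ∧ 1 ≤ k ∧ HasDisjointAntiOrbits f k} = ∅ := by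
    ext x
    simp only [Set.mem_setOf_eq, Set.mem_empty_iff_false, iff_false]
    rintro ⟨k, rfl, hk1, a, hprops, hdisj⟩
    exact h (a ⟨0, hk1⟩) (hprops ⟨0, hk1⟩).1 (hprops ⟨0, hk1⟩).2
  rw [entCset, antiOrbitNumber, hempty, Set.union_empty, sSup_singleton]

lemma entCset_eq_top (h : ∀ m : ℕ, HasDisjointAntiOrbits f m) :
    entCset f = ⊤ := by
  rw [entCset, antiOrbitNumber]
  apply sSup_eq_top.mpr
  intro b hb
  lift b to ℕ using hb.ne
  refine ⟨((b + 1 : ℕ) : ℕ∞), Or.inr ⟨b + 1, rfl, by omega, h (b + 1)⟩, ?_⟩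
  exact_mod_cast Nat.lt_succ_self b
end

section
variable {F : Type*} [Field F] [Fintype F] {Γ : Type*} (φ : Γ → Γ)

lemma main_w (w : Γ → F) (hw : ∀ α, w α ≠ 0)
    (hP : ∀ k, 1 ≤ k → ∃ α, ∀ t, φ^[t + k] α ≠ φ^[t] α) :
    entCset (wshift φ w) = ⊤ := by
  apply entCset_eq_top
  rcases dichotomy φ hP with ⟨β, hβ⟩ | hcyc
  · exact fun m => hasDisjoint_caseI φ w hw hβ m
  · exact fun m => hasDisjoint_caseII φ w hw hcyc m

lemma main_w' (w : Γ → F) (hw : ∀ α, w α ≠ 0)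
    (hnP : ¬ ∀ k, 1 ≤ k → ∃ α, ∀ t, φ^[t + k] α ≠ φ^[t] α) :
    entCset (wshift φ w) = 0 := by
  apply entCset_eq_zero
  push_neg at hnP
  obtain ⟨k, hk1, hk⟩ := hnP
  intro a ha
  exact not_injective_of_ev φ w hw hk1 (fun α => by
    obtain ⟨t, ht⟩ := hk α
    exact ⟨t, ht⟩) ha
end


/-- If `𝔴` is nowhere zero and `σ_{φ,𝔴}` is finite fibre, then
`ent_cset(σ_{φ,𝔴}) = ent_cset(σ_φ) ∈ {0, +∞}`. -/
theorem stmt_15 {F : Type*} [Field F] [Fintype F] {Γ : Type*} [Nonempty Γ]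
    (φ : Γ → Γ) (w : Γ → F) (hw : ∀ α : Γ, w α ≠ 0)
    (hff : FiniteFibre (wshift φ w)) :
    entCset (wshift φ w) = entCset (wshift φ (1 : Γ → F)) ∧
    (entCset (wshift φ w) = 0 ∨ entCset (wshift φ w) = ⊤) := by
  have hw1 : ∀ α : Γ, (1 : Γ → F) α ≠ 0 := fun α => one_ne_zero
  by_cases hP : ∀ k, 1 ≤ k → ∃ α, ∀ t, φ^[t + k] α ≠ φ^[t] α
  · rw [main_w φ w hw hP, main_w φ (1 : Γ → F) hw1 hP]
    exact ⟨rfl, Or.inr rfl⟩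
  · rw [main_w' φ w hw hP, main_w' φ (1 : Γ → F) hw1 hP]
    exact ⟨rfl, Or.inl rfl⟩
end

section
/- If σ_φ : F^Γ → F^Γ is finite fibre, ent_cset(σ_φ) = +∞ (i.e. 𝖺(σ_φ) = +∞), and ent_set(σ_{φ,𝔴}) = 0 (i.e. σ_{φ,𝔴} is quasi-periodic), then σ_{φ,𝔴} : F^Γ → F^Γ is not finite fibre. -/
open Function Set

section AuxStmt18

variable {F : Type*} [Field F] {Γ : Type*}

/-- A backward `W`-chain of length `L` avoiding `B`. -/
def GoodChain (φ : Γ → Γ) (w : Γ → F) (B : Set Γ) (L : ℕ) (γ : ℕ → Γ) : Prop :=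
  (∀ k < L, φ (γ (k + 1)) = γ k) ∧ (∀ k, 1 ≤ k → k ≤ L → w (γ k) ≠ 0) ∧
    Set.InjOn γ (Set.Iic L) ∧ ∀ k ≤ L, γ k ∉ B

lemma lemA [Nonempty Γ] {φ : Γ → Γ} {w : Γ → F}
    (hA : ∀ B : Set Γ, B.Finite → ∀ L : ℕ, ∃ γ : ℕ → Γ, GoodChain φ w B L γ) :
    ∃ x : Γ → F, ∀ n m : ℕ, n < m → (wshift φ w)^[n] x ≠ (wshift φ w)^[m] x := by
  classical
  have hexists : ∀ s : Finset ((ℕ → Γ) × ℕ), (∀ p ∈ s, GoodChain φ w ∅ p.2 p.1) →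
      ∃ q : (ℕ → Γ) × ℕ, GoodChain φ w ∅ q.2 q.1 ∧
        ∀ p ∈ s, p.2 < q.2 ∧ ∀ k ≤ p.2, ∀ l ≤ q.2, p.1 k ≠ q.1 l := by
    intro s hs
    set B : Set Γ := ⋃ p ∈ s, p.1 '' Set.Iic p.2 with hB
    have hBfin : B.Finite := s.finite_toSet.biUnion fun p _ => (Set.finite_Iic p.2).image p.1
    set L' : ℕ := (s.sup fun p => p.2) + 1 with hL'
    obtain ⟨γ, hγ⟩ := hA B hBfin L'
    refine ⟨(γ, L'), ⟨hγ.1, hγ.2.1, hγ.2.2.1, by simp⟩, ?_⟩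
    intro p hp
    constructor
    · have hle : p.2 ≤ s.sup (fun p : (ℕ → Γ) × ℕ => p.2) := Finset.le_sup hp
      omega
    · intro k hk l hl heq
      apply hγ.2.2.2 l hl
      rw [hB]
      exact Set.mem_biUnion hp ⟨k, hk, heq⟩
  obtain ⟨g, hg1, hg2⟩ := exists_seq_of_forall_finset_exists
    (fun p : (ℕ → Γ) × ℕ => GoodChain φ w ∅ p.2 p.1)
    (fun p q => p.2 < q.2 ∧ ∀ k ≤ p.2, ∀ l ≤ q.2, p.1 k ≠ q.1 l) hexists
  have hmono : StrictMono fun n => (g n).2 := fun m n h => (hg2 m n h).1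
  have hlen : ∀ n, n ≤ (g n).2 := fun n => by
    have := hmono
    exact hmono.le_apply
  set x : Γ → F := fun β => if ∃ n, (g n).1 0 = β then 1 else 0 with hxdef
  have hx0 : ∀ j, x ((g j).1 0) = 1 := fun j => if_pos ⟨j, rfl⟩
  have hxk : ∀ j k, 1 ≤ k → k ≤ (g j).2 → x ((g j).1 k) = 0 := by
    intro j k hk1 hk2
    apply if_neg
    rintro ⟨n, hn⟩
    rcases lt_trichotomy n j with h | h | h
    · exact (hg2 n j h).2 0 (Nat.zero_le _) k hk2 hn
    · subst h
      have := (hg1 n).2.2.1 (Set.mem_Iic.mpr (Nat.zero_le _)) (Set.mem_Iic.mpr hk2) hn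
      omega
    · exact (hg2 j n h).2 k hk2 0 (Nat.zero_le _) hn.symm
  have heval : ∀ j t m, t ≤ m → m ≤ (g j).2 →
      ∃ u : F, u ≠ 0 ∧ (wshift φ w)^[t] x ((g j).1 m) = u * x ((g j).1 (m - t)) := by
    intro j t
    induction t with
    | zero => intro m _ _; exact ⟨1, one_ne_zero, by simp⟩
    | succ t ih =>
      intro m htm hmL
      have hm1 : 1 ≤ m := by omega
      obtain ⟨u, hu, hval⟩ := ih (m - 1) (by omega) (by omega)
      refine ⟨w ((g j).1 m) * u, mul_ne_zero ((hg1 j).2.1 m hm1 hmL) hu, ?_⟩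
      rw [Function.iterate_succ_apply']
      have hlink : φ ((g j).1 m) = (g j).1 (m - 1) := by
        have h := (hg1 j).1 (m - 1) (by omega)
        rwa [Nat.sub_add_cancel hm1] at h
      show w ((g j).1 m) * (wshift φ w)^[t] x (φ ((g j).1 m)) = _
      rw [hlink, hval, mul_assoc, show m - 1 - t = m - (t + 1) by omega]
  refine ⟨x, ?_⟩
  intro n m hnm heq
  have hLm : m ≤ (g m).2 := hlen m
  obtain ⟨u, hu, h1⟩ := heval m m m le_rfl hLm
  obtain ⟨v, hv, h2⟩ := heval m n m (le_of_lt hnm) hLm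
  have hc := congrFun heq ((g m).1 m)
  rw [h1, h2, Nat.sub_self, hx0, hxk m (m - n) (by omega) (by omega), mul_one, mul_zero] at hc
  exact hu hc.symm


lemma lemB {φ : Γ → Γ} {w : Γ → F}
    (hD : {β : Γ | β ∉ φ '' {α | w α ≠ 0}}.Finite)
    (B : Set Γ) (hBfin : B.Finite) (L₀ : ℕ)
    (hno : ∀ γ : ℕ → Γ, ¬ GoodChain φ w B L₀ γ) :
    ∃ K P : ℕ, 1 ≤ P ∧ φ^[K + P] = φ^[K] := by
  classical
  set W : Set Γ := {α | w α ≠ 0} with hWdef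
  set D : Set Γ := {β | β ∉ φ '' W} with hDdef
  set B₀ : Set Γ := B ∪ D with hB₀def
  have hB₀fin : B₀.Finite := hBfin.union hD
  have hno₀ : ∀ γ : ℕ → Γ, ¬ GoodChain φ w B₀ L₀ γ := by
    intro γ hγ
    exact hno γ ⟨hγ.1, hγ.2.1, hγ.2.2.1, fun k hk hm => hγ.2.2.2 k hk (Or.inl hm)⟩
  have hpar : ∀ β : Γ, β ∉ D → ∃ g : Γ, w g ≠ 0 ∧ φ g = β := by
    intro β hβ
    have hmem : β ∈ φ '' W := not_not.mp hβ
    obtain ⟨g, hg, hgeq⟩ := hmem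
    exact ⟨g, hg, hgeq⟩
  set Per : Set Γ := {α | ∃ p, 1 ≤ p ∧ φ^[p] α = α} with hPerdef
  have hPerIm : ∀ α ∈ Per, ∀ t : ℕ, φ^[t] α ∈ Per := by
    rintro α ⟨p, hp1, hp2⟩ t
    refine ⟨p, hp1, ?_⟩
    rw [← Function.iterate_add_apply, Nat.add_comm, Function.iterate_add_apply, hp2]
  have hUhelp : ∀ (c c' : Γ) (p q : ℕ), 1 ≤ p → 1 ≤ q → p ≤ q →
      φ^[p] c = c → φ^[q] c' = c' → φ c = φ c' → c = c' := by
    intro c c' p q hp hq hpq hc hc' h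
    have hβp : φ^[p] (φ c) = φ c := by
      calc φ^[p] (φ c) = φ^[p + 1] c := (Function.iterate_succ_apply φ p c).symm
        _ = φ (φ^[p] c) := Function.iterate_succ_apply' φ p c
        _ = φ c := by rw [hc]
    have hcβ : φ^[p - 1] (φ c) = c := by
      have h2 : φ^[(p - 1) + 1] c = φ^[p - 1] (φ c) := Function.iterate_succ_apply φ (p - 1) c
      rw [Nat.sub_add_cancel hp] at h2
      rw [← h2, hc]
    have hc'β : φ^[q - 1] (φ c') = c' := by
      have h2 : φ^[(q - 1) + 1] c' = φ^[q - 1] (φ c') := Function.iterate_succ_apply φ (q - 1) c'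
      rw [Nat.sub_add_cancel hq] at h2
      rw [← h2, hc']
    have hβq : φ^[q] (φ c) = φ c := by
      rw [h]
      calc φ^[q] (φ c') = φ^[q + 1] c' := (Function.iterate_succ_apply φ q c').symm
        _ = φ (φ^[q] c') := Function.iterate_succ_apply' φ q c'
        _ = φ c' := by rw [hc']
    have hβd : φ^[q - p] (φ c) = φ c := by
      have h1 : φ^[(q - p) + p] (φ c) = φ^[q - p] (φ^[p] (φ c)) :=
        Function.iterate_add_apply φ (q - p) p (φ c)
      rw [hβp, show (q - p) + p = q by omega] at h1
      rw [← h1, hβq]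
    calc c = φ^[p - 1] (φ c) := hcβ.symm
      _ = φ^[p - 1] (φ^[q - p] (φ c)) := by rw [hβd]
      _ = φ^[(p - 1) + (q - p)] (φ c) := (Function.iterate_add_apply φ (p - 1) (q - p) (φ c)).symm
      _ = φ^[q - 1] (φ c) := by rw [show (p - 1) + (q - p) = q - 1 by omega]
      _ = φ^[q - 1] (φ c') := by rw [h]
      _ = c' := hc'β
  have hU : ∀ c ∈ Per, ∀ c' ∈ Per, φ c = φ c' → c = c' := by
    rintro c ⟨p, hp1, hp2⟩ c' ⟨q, hq1, hq2⟩ h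
    rcases le_total p q with hpq | hpq
    · exact hUhelp c c' p q hp1 hq1 hpq hp2 hq2 h
    · exact (hUhelp c' c q p hq1 hp1 hpq hq2 hp2 h.symm).symm
  have hgrow : ∀ β : Γ, β ∉ Per → β ∉ B₀ → ∃ k, 1 ≤ k ∧ k ≤ L₀ ∧ β ∈ φ^[k] '' B₀ := by
    intro β hβP hβB
    set γ : ℕ → Γ := fun k => Nat.rec (motive := fun _ => Γ) β
      (fun _ prev => if h : prev ∈ B₀ then prev
        else Classical.choose (hpar prev (fun hd => h (Or.inr hd)))) k with hγdef
    have hγ0 : γ 0 = β := rfl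
    have hstep : ∀ k, γ k ∉ B₀ → w (γ (k + 1)) ≠ 0 ∧ φ (γ (k + 1)) = γ k := by
      intro k hk
      have hsucc : γ (k + 1) = if h : γ k ∈ B₀ then γ k
          else Classical.choose (hpar (γ k) (fun hd => h (Or.inr hd))) := rfl
      rw [hsucc, dif_neg hk]
      exact Classical.choose_spec (hpar (γ k) (fun hd => hk (Or.inr hd)))
    by_cases hcase : ∃ k, k ≤ L₀ ∧ γ k ∈ B₀
    · set k₀ := Nat.find hcase with hk₀def
      obtain ⟨hk₀L, hk₀B⟩ := Nat.find_spec hcase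
      have hmin : ∀ i, i < k₀ → γ i ∉ B₀ := by
        intro i hi him
        exact Nat.find_min hcase hi ⟨by omega, him⟩
      have hk₀1 : 1 ≤ k₀ := by
        rcases Nat.eq_zero_or_pos k₀ with h | h
        · exfalso
          rw [← hk₀def, h, hγ0] at hk₀B
          exact hβB hk₀B
        · exact h
      have hfwd : ∀ i, i ≤ k₀ → φ^[i] (γ i) = β := by
        intro i
        induction i with
        | zero => intro _; exact hγ0
        | succ i ih =>
          intro hi
          rw [Function.iterate_succ_apply, (hstep i (hmin i (by omega))).2]
          exact ih (by omega)
      exact ⟨k₀, hk₀1, hk₀L, γ k₀, hk₀B, hfwd k₀ le_rfl⟩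
    · push_neg at hcase
      exfalso
      apply hno₀ γ
      have havoid : ∀ k, k ≤ L₀ → γ k ∉ B₀ := fun k hk => hcase k hk
      have hfwd2 : ∀ d a, a + d ≤ L₀ → φ^[d] (γ (a + d)) = γ a := by
        intro d
        induction d with
        | zero => intro a _; rfl
        | succ d ih =>
          intro a ha
          rw [show a + (d + 1) = (a + d) + 1 by omega, Function.iterate_succ_apply,
            (hstep (a + d) (havoid (a + d) (by omega))).2]
          exact ih a (by omega)
      refine ⟨?_, ?_, ?_, havoid⟩
      · intro k hk
        exact (hstep k (havoid k (by omega))).2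
      · intro k hk1 hk2
        have h := (hstep (k - 1) (havoid (k - 1) (by omega))).1
        rwa [Nat.sub_add_cancel hk1] at h
      · intro k hk l hl heq
        simp only [Set.mem_Iic] at hk hl
        by_contra hne
        have haux : ∀ a c : ℕ, a < c → c ≤ L₀ → γ a = γ c → False := by
          intro a c hac hcL heqac
          have h1 : φ^[c - a] (γ c) = γ a := by
            have h2 := hfwd2 (c - a) a (by omega)
            rwa [show a + (c - a) = c by omega] at h2
          have h2 : γ c ∈ Per := ⟨c - a, by omega, by rw [h1, heqac]⟩
          have h3 : φ^[c] (γ c) = β := by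
            have h4 := hfwd2 c 0 (by omega)
            rwa [Nat.zero_add] at h4
          have h5 := hPerIm (γ c) h2 c
          rw [h3] at h5
          exact hβP h5
        rcases Nat.lt_trichotomy k l with h | h | h
        · exact haux k l h hl heq
        · exact hne h
        · exact haux l k h hk heq.symm
  set NP : Set Γ := {β : Γ | β ∉ Per} with hNPdef
  have hNPfin : NP.Finite := by
    have hsub : NP ⊆ B₀ ∪ ⋃ k ∈ Set.Icc 1 L₀, φ^[k] '' B₀ := by
      intro β hβ
      by_cases hb : β ∈ B₀
      · exact Or.inl hb
      · obtain ⟨k, h1, h2, h3⟩ := hgrow β hβ hb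
        exact Or.inr (Set.mem_biUnion (Set.mem_Icc.mpr ⟨h1, h2⟩) h3)
    exact (hB₀fin.union ((Set.finite_Icc 1 L₀).biUnion fun k _ => hB₀fin.image _)).subset hsub
  have hEfin : (Per \ W).Finite := by
    apply Set.Finite.of_finite_image (f := φ)
    · apply (hD.union (hNPfin.image φ)).subset
      rintro y ⟨c, ⟨hcPer, hcW⟩, rfl⟩
      by_cases hd : φ c ∈ D
      · exact Or.inl hd
      · obtain ⟨η, hη, hφη⟩ := hpar (φ c) hd
        right
        refine ⟨η, ?_, hφη⟩
        intro hηPer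
        have heq := hU η hηPer c hcPer hφη
        exact hcW (heq ▸ hη)
    · intro c hc c' hc' heq
      exact hU c hc.1 c' hc'.1 heq
  set Bad : Set Γ := B₀ ∪ (Per \ W) with hBaddef
  have hBadfin : Bad.Finite := hB₀fin.union hEfin
  set b : ℕ := hBadfin.toFinset.card with hbdef
  set M : ℕ := (b + 1) * (L₀ + 1) with hMdef
  have hMeq : M = b * (L₀ + 1) + (L₀ + 1) := by rw [hMdef, Nat.succ_mul]
  have hPerBound : ∀ β ∈ Per, ∃ ℓ, 1 ≤ ℓ ∧ ℓ ≤ M ∧ φ^[ℓ] β = β := by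
    intro β hβ
    have hβ' : ∃ p, 1 ≤ p ∧ φ^[p] β = β := hβ
    set ℓ := Nat.find hβ' with hℓdef
    obtain ⟨hℓ1, hℓfix⟩ := Nat.find_spec hβ'
    refine ⟨ℓ, hℓ1, ?_, hℓfix⟩
    by_contra hMℓ
    push_neg at hMℓ
    have hinj : ∀ e f : ℕ, e < ℓ → f < ℓ → φ^[e] β = φ^[f] β → e = f := by
      have haux : ∀ e f : ℕ, e < f → f < ℓ → φ^[e] β = φ^[f] β → False := by
        intro e f hef hfℓ heq
        have h1 : φ^[(ℓ - f) + f] β = β := by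
          rw [show (ℓ - f) + f = ℓ by omega]; exact hℓfix
        rw [Function.iterate_add_apply, ← heq, ← Function.iterate_add_apply] at h1
        exact Nat.find_min hβ' (show (ℓ - f) + e < ℓ by omega) ⟨by omega, h1⟩
      intro e f he hf heq
      rcases Nat.lt_trichotomy e f with h | h | h
      · exact absurd heq fun hh => haux e f h hf hh
      · exact h
      · exact absurd heq.symm fun hh => haux f e h he hh
    have hblocks : ∀ i, i ≤ b →
        ∃ e, i * (L₀ + 1) ≤ e ∧ e ≤ i * (L₀ + 1) + L₀ ∧ φ^[e] β ∈ Bad := by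
      by_contra hcon
      push_neg at hcon
      obtain ⟨i, hib, hgood⟩ := hcon
      have hmul : i * (L₀ + 1) ≤ b * (L₀ + 1) := Nat.mul_le_mul_right _ hib
      set s := i * (L₀ + 1) with hsdef
      have hsM : s + L₀ + 1 ≤ M := by omega
      apply hno₀ (fun k => φ^[s + L₀ - k] β)
      have hPerβ : ∀ e : ℕ, φ^[e] β ∈ Per := fun e => hPerIm β hβ e
      refine ⟨?_, ?_, ?_, ?_⟩
      · intro k hk
        show φ (φ^[s + L₀ - (k + 1)] β) = φ^[s + L₀ - k] β
        rw [← Function.iterate_succ_apply' φ (s + L₀ - (k + 1)) β]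
        have hh : (s + L₀ - (k + 1)).succ = s + L₀ - k := by omega
        rw [hh]
      · intro k hk1 hk2
        have hgd := hgood (s + L₀ - k) (by omega) (by omega)
        by_contra hw
        exact hgd (Or.inr ⟨hPerβ _, fun hne => hne hw⟩)
      · intro k hk l hl heq
        simp only [Set.mem_Iic] at hk hl
        have he := hinj (s + L₀ - k) (s + L₀ - l) (by omega) (by omega) heq
        omega
      · intro k hk hmem
        exact hgood (s + L₀ - k) (by omega) (by omega) (Or.inl hmem)
    choose! e he1 he2 he3 using hblocks
    have heℓ : ∀ i, i ≤ b → e i < ℓ := by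
      intro i hib
      have hmul : i * (L₀ + 1) ≤ b * (L₀ + 1) := Nat.mul_le_mul_right _ hib
      have := he2 i hib
      omega
    have hginj : Function.Injective
        (fun i : Fin (b + 1) => (⟨φ^[e i.1] β, (hBadfin.mem_toFinset).mpr (he3 i.1 (by omega))⟩ :
          {y // y ∈ hBadfin.toFinset})) := by
      intro i j hij
      simp only [Subtype.mk.injEq] at hij
      have hi : i.1 ≤ b := by omega
      have hj : j.1 ≤ b := by omega
      have hee := hinj _ _ (heℓ i.1 hi) (heℓ j.1 hj) hij
      apply Fin.ext
      by_contra hne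
      rcases Nat.lt_trichotomy i.1 j.1 with h | h | h
      · have h1 := he2 i.1 hi
        have h2 := he1 j.1 hj
        have hmul : (i.1 + 1) * (L₀ + 1) ≤ j.1 * (L₀ + 1) := Nat.mul_le_mul_right _ (by omega)
        rw [Nat.succ_mul] at hmul
        omega
      · exact hne h
      · have h1 := he2 j.1 hj
        have h2 := he1 i.1 hi
        have hmul : (j.1 + 1) * (L₀ + 1) ≤ i.1 * (L₀ + 1) := Nat.mul_le_mul_right _ (by omega)
        rw [Nat.succ_mul] at hmul
        omega
    have hcard := Fintype.card_le_of_injective _ hginj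
    simp only [Fintype.card_fin, Fintype.card_coe] at hcard
    omega
  set n₀ : ℕ := hNPfin.toFinset.card with hn₀def
  set K : ℕ := n₀ + 1 with hKdef
  have hKper : ∀ α : Γ, φ^[K] α ∈ Per := by
    intro α
    have hexi : ∃ i, i ≤ K ∧ φ^[i] α ∈ Per := by
      by_contra hcon
      push_neg at hcon
      have hmem : ∀ i : Fin (K + 1), φ^[i.1] α ∈ hNPfin.toFinset := by
        intro i
        rw [Set.Finite.mem_toFinset]
        exact hcon i.1 (by omega)
      have hinj2 : Function.Injective
          (fun i : Fin (K + 1) => (⟨φ^[i.1] α, hmem i⟩ : {y // y ∈ hNPfin.toFinset})) := by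
        intro i j hij
        simp only [Subtype.mk.injEq] at hij
        have haux : ∀ a c : Fin (K + 1), a.1 < c.1 → φ^[a.1] α = φ^[c.1] α → False := by
          intro a c hac heq
          have hp : φ^[a.1] α ∈ Per := ⟨c.1 - a.1, by omega, by
            rw [← Function.iterate_add_apply, show c.1 - a.1 + a.1 = c.1 by omega, ← heq]⟩
          exact hcon a.1 (by omega) hp
        apply Fin.ext
        rcases Nat.lt_trichotomy i.1 j.1 with h | h | h
        · exact absurd hij fun hh => haux i j h hh
        · exact h
        · exact absurd hij.symm fun hh => haux j i h hh
      have hcard := Fintype.card_le_of_injective _ hinj2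
      simp only [Fintype.card_fin, Fintype.card_coe] at hcard
      omega
    obtain ⟨i, hiK, hiPer⟩ := hexi
    have h6 := hPerIm _ hiPer (K - i)
    rwa [← Function.iterate_add_apply, show K - i + i = K by omega] at h6
  refine ⟨K, M.factorial, Nat.one_le_iff_ne_zero.mpr (Nat.factorial_ne_zero M), ?_⟩
  funext α
  obtain ⟨ℓ, hℓ1, hℓM, hℓfix⟩ := hPerBound _ (hKper α)
  obtain ⟨t, ht⟩ := Nat.dvd_factorial hℓ1 hℓM
  rw [show K + M.factorial = M.factorial + K by omega, Function.iterate_add_apply, ht,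
    Function.iterate_mul]
  exact Function.iterate_fixed hℓfix t


end AuxStmt18

/-- If `σ_φ` is finite fibre, `ent_cset(σ_φ) = +∞`, and `ent_set(σ_{φ,𝔴}) = 0`, then
`σ_{φ,𝔴}` is not finite fibre. -/
theorem stmt_18 {F : Type*} [Field F] [Fintype F] {Γ : Type*} [Nonempty Γ]
    (φ : Γ → Γ) (w : Γ → F)
    (hffφ : FiniteFibre (wshift φ (1 : Γ → F)))
    (h1 : entCset (wshift φ (1 : Γ → F)) = ⊤)
    (h2 : entSet (wshift φ w) = 0) :
    ¬ FiniteFibre (wshift φ w) := by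
  classical
  intro hff
  -- Step 1: no injective orbit of `wshift φ w`
  have hNoInj : ∀ x : Γ → F, ∃ n m : ℕ, n < m ∧ (wshift φ w)^[n] x = (wshift φ w)^[m] x := by
    intro x
    by_contra hcon
    push_neg at hcon
    have horb : HasDisjointOrbits (wshift φ w) 1 := by
      refine ⟨fun _ => fun n => (wshift φ w)^[n] x, fun i => ⟨?_, ?_⟩, ?_⟩
      · intro n
        exact (Function.iterate_succ_apply' (wshift φ w) n x).symm
      · intro n m hnm
        by_contra hne
        rcases Nat.lt_trichotomy n m with h | h | h
        · exact hcon n m h hnm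
        · exact hne h
        · exact hcon m n h hnm.symm
      · intro i j hij
        exact absurd (Subsingleton.elim i j) hij
    have hle : (1 : ℕ∞) ≤ entSet (wshift φ w) := by
      apply le_sSup
      exact Or.inr ⟨1, by norm_num, le_rfl, horb⟩
    rw [h2] at hle
    simp at hle
  -- Step 2: an injective anti-orbit of the unweighted shift
  have hanti : ∃ k : ℕ, 1 ≤ k ∧ HasDisjointAntiOrbits (wshift φ (1 : Γ → F)) k := by
    by_contra hc
    push_neg at hc
    have hset : {m : ℕ∞ | ∃ k : ℕ, m = (k : ℕ∞) ∧ 1 ≤ k ∧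
        HasDisjointAntiOrbits (wshift φ (1 : Γ → F)) k} = ∅ := by
      ext m
      simp only [Set.mem_setOf_eq, Set.mem_empty_iff_false, iff_false]
      rintro ⟨k, rfl, hk, hh⟩
      exact hc k hk hh
    rw [entCset, antiOrbitNumber, hset, Set.union_empty, sSup_singleton] at h1
    simp at h1
  obtain ⟨k, hk1, A', hA'1, -⟩ := hanti
  set A : ℕ → Γ → F := A' ⟨0, hk1⟩ with hAdef
  have hAanti := (hA'1 ⟨0, hk1⟩).1
  have hAinj := (hA'1 ⟨0, hk1⟩).2
  have ha : ∀ n (α : Γ), A (n + 1) (φ α) = A n α := by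
    intro n α
    have := congrFun (hAanti n) α
    simpa [wshift] using this
  -- Step 3: the iterates of φ are pairwise distinct
  have hstepA : ∀ kk n (α : Γ), A (n + kk) (φ^[kk] α) = A n α := by
    intro kk
    induction kk with
    | zero => intro n α; simp
    | succ m ih =>
      intro n α
      rw [show n + (m + 1) = (n + 1) + m by omega, Function.iterate_succ_apply, ih (n + 1) (φ α),
        ha]
  have P1 : ∀ i j : ℕ, i < j → φ^[i] ≠ φ^[j] := by
    intro i j hij heq
    have hAeq : A 0 = A (j - i) := by
      funext α
      calc A 0 α = A (0 + j) (φ^[j] α) := (hstepA j 0 α).symm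
        _ = A ((j - i) + i) (φ^[i] α) := by rw [← heq, show 0 + j = (j - i) + i by omega]
        _ = A (j - i) α := hstepA i (j - i) α
    have := hAinj hAeq
    omega
  -- Step 4: finiteness of Γ \ φ(W) from finite fibre of wshift φ w at 0
  have hDfin : {β : Γ | β ∉ φ '' {α | w α ≠ 0}}.Finite := by
    have h0 : ((wshift φ w) ⁻¹' {0}).Finite := hff 0
    set f : Γ → (Γ → F) := fun d α => if α = d then 1 else 0 with hfdef
    have hmap : ∀ d ∈ {β : Γ | β ∉ φ '' {α | w α ≠ 0}}, f d ∈ (wshift φ w) ⁻¹' {0} := by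
      intro d hd
      simp only [Set.mem_preimage, Set.mem_singleton_iff]
      funext α
      show w α * f d (φ α) = 0
      by_cases hw : w α = 0
      · rw [hw, zero_mul]
      · have hne : φ α ≠ d := by
          intro hcontra
          exact hd ⟨α, hw, hcontra⟩
        show w α * (if φ α = d then 1 else 0) = 0
        rw [if_neg hne, mul_zero]
    have hinj : Set.InjOn f {β : Γ | β ∉ φ '' {α | w α ≠ 0}} := by
      intro d hd d' hd' heq
      have := congrFun heq d
      simp only [hfdef, if_pos rfl] at this
      by_contra hne
      rw [if_neg (Ne.symm ?_)] at this
      · exact one_ne_zero this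
      · exact fun hc => hne hc.symm
    exact Set.Finite.of_finite_image
      (h0.subset (by rintro y ⟨d, hd, rfl⟩; exact hmap d hd)) hinj
  -- Step 5: dichotomy
  by_cases hA : ∀ B : Set Γ, B.Finite → ∀ L : ℕ, ∃ γ : ℕ → Γ, GoodChain φ w B L γ
  · obtain ⟨x, hx⟩ := lemA hA
    obtain ⟨n, m, hnm, heq⟩ := hNoInj x
    exact hx n m hnm heq
  · push_neg at hA
    obtain ⟨B, hBfin, L, hno⟩ := hA
    obtain ⟨K, P, hP, hiter⟩ := lemB hDfin B hBfin L hno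
    exact P1 K (K + P) (by omega) hiter.symm
end
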